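/- arXiv:2603.28806 — 8 statements merged into one kernel-verified Lean document; each statement's English description precedes it below -/
import Mathlib

section
/- Let M > 0 and let f = h + conj(g) be a harmonic mapping in the class P⁰_H(M) such that |f(z)| < M for all z ∈ D. Then f is univalent (injective) on the disc D_{ρ₁}, where ρ₁ = 1 − exp(−π/(8M²)). -/
/-!
For `‖u‖ = 1` the analytic function `φ = h' - 1 + u g'` vanishes at `0`, and the class condition
gives `Re (z φ'(z)) > -M`. Borel–Carathéodory applied to `z φ'(z)` yields
`‖φ'(z)‖ ≤ 2M / (1 - ‖z‖)`, and integrating along the radius `‖φ(z)‖ ≤ 2M log (1 / (1 - ‖z‖))`.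
Rotating `u` so that the two terms of `φ(z)` align bounds `‖h' - 1‖ + ‖g'‖`, the norm of the real
derivative of `f - id`; on `‖z‖ < ρ₁` this is at most `π / (4M)`. Moreover `M ≥ 1`: adding `conj g`
does not change the Cauchy integral of `h'(0)` over `‖z‖ = r`, so `1 ≤ M / r` for every `r < 1`.
Hence `f - id` is a contraction on the disc of radius `ρ₁`, and `f` is injective there.
-/

open Complex ComplexConjugate Metric Set

theorem exists_norm_eq_one_norm_add_mul_eq_add_norm (a b : ℂ) :
    ∃ u : ℂ, ‖u‖ = 1 ∧ ‖a + u * b‖ = ‖a‖ + ‖b‖ := by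
  refine ⟨exp ((arg a - arg b : ℝ) * I), norm_exp_ofReal_mul_I _, ?_⟩
  have hrot : a + exp ((arg a - arg b : ℝ) * I) * b =
      ((‖a‖ + ‖b‖ : ℝ) : ℂ) * exp (arg a * I) := calc
    _ = ‖a‖ * exp (arg a * I) + exp ((arg a - arg b : ℝ) * I) * (‖b‖ * exp (arg b * I)) := by
      rw [norm_mul_exp_arg_mul_I, norm_mul_exp_arg_mul_I]
    _ = _ := by
      rw [mul_left_comm, ← exp_add]
      push_cast
      ring_nf
  rw [hrot, norm_mul, norm_exp_ofReal_mul_I, mul_one, norm_real,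
    Real.norm_of_nonneg (by positivity)]

theorem norm_deriv_mul_one_sub_norm_le_of_neg_lt_re {F : ℂ → ℂ} {M : ℝ} (hM : 0 < M)
    (hF : DifferentiableOn ℂ F (ball 0 1)) (hre : ∀ w ∈ ball (0 : ℂ) 1, -M < (w * deriv F w).re)
    {w : ℂ} (hw : w ∈ ball 0 1) : ‖deriv F w‖ * (1 - ‖w‖) ≤ 2 * M := by
  have hF' : DifferentiableOn ℂ (deriv F) (ball 0 1) := hF.deriv isOpen_ball
  have hoff : ∀ v ∈ ball (0 : ℂ) 1, v ≠ 0 → ‖deriv F v‖ * (1 - ‖v‖) ≤ 2 * M := by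
    intro v hv hv0
    have hv1 : 0 < 1 - ‖v‖ := by linarith [mem_ball_zero_iff.mp hv]
    have hBC := borelCaratheodory_zero (f := fun v => -(v * deriv F v)) hM
      (differentiableOn_id.mul hF').neg
      (fun x hx => by simp only [mem_ofPred_eq, neg_re]; linarith [hre x hx]) one_pos hv (by simp)
    rw [norm_neg, norm_mul, le_div_iff₀ hv1] at hBC
    nlinarith [norm_pos_iff.mpr hv0]
  -- Borel–Carathéodory bounds `‖v * deriv F v‖`, which says nothing at `v = 0`: pass to the limit.
  rcases eq_or_ne w 0 with rfl | hw0
  · have hcont : ContinuousAt (fun v => ‖deriv F v‖ * (1 - ‖v‖)) 0 :=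
      ((hF'.continuousOn.continuousAt (isOpen_ball.mem_nhds hw)).norm).mul
        (continuous_const.sub continuous_norm).continuousAt
    refine le_of_tendsto (hcont.tendsto.mono_left (nhdsWithin_le_nhds (s := {0}ᶜ))) ?_
    filter_upwards [self_mem_nhdsWithin, nhdsWithin_le_nhds (isOpen_ball.mem_nhds hw)] with v hv0 hv
      using hoff v hv hv0
  · exact hoff w hw hw0

theorem norm_sub_le_mul_neg_log_of_norm_deriv_mul_le {E : Type*} [NormedAddCommGroup E]
    [NormedSpace ℂ E] {F : ℂ → E} {K : ℝ} (hF : DifferentiableOn ℂ F (ball 0 1))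
    (hF' : ∀ w ∈ ball (0 : ℂ) 1, ‖deriv F w‖ * (1 - ‖w‖) ≤ K) {z : ℂ} (hz : z ∈ ball 0 1) :
    ‖F z - F 0‖ ≤ K * -Real.log (1 - ‖z‖) := by
  have hz1 : ‖z‖ < 1 := mem_ball_zero_iff.mp hz
  have hpos : ∀ t ∈ Icc (0 : ℝ) 1, 0 < 1 - t * ‖z‖ := fun t ht => by
    nlinarith [ht.2, norm_nonneg z]
  have hmem : ∀ t ∈ Icc (0 : ℝ) 1, (t : ℂ) * z ∈ ball (0 : ℂ) 1 := fun t ht => by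
    rw [mem_ball_zero_iff, norm_mul, norm_real, Real.norm_of_nonneg ht.1]
    linarith [hpos t ht]
  have hf : ∀ t ∈ Icc (0 : ℝ) 1,
      HasDerivAt (fun t : ℝ => F (t * z) - F 0) (z • deriv F (t * z)) t := fun t ht => by
    have hpath : HasDerivAt (fun t : ℝ => (t : ℂ) * z) z t := by
      simpa using ((hasDerivAt_id (t : ℂ)).mul_const z).comp_ofReal
    exact (((hF.differentiableAt (isOpen_ball.mem_nhds (hmem t ht))).hasDerivAt).scomp t
      hpath).sub_const _
  have hB : ∀ t ∈ Icc (0 : ℝ) 1, HasDerivAt (fun t => K * -Real.log (1 - t * ‖z‖))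
      (K * (‖z‖ / (1 - t * ‖z‖))) t := fun t ht => by
    exact ((((hasDerivAt_id t).mul_const ‖z‖).const_sub 1).log (hpos t ht).ne').neg.const_mul K
      |>.congr_deriv (by simp [neg_div])
  have hbound : ∀ t ∈ Icc (0 : ℝ) 1,
      ‖z • deriv F (t * z)‖ ≤ K * (‖z‖ / (1 - t * ‖z‖)) := fun t ht => by
    have hderiv := hF' _ (hmem t ht)
    rw [norm_mul, norm_real, Real.norm_of_nonneg ht.1, ← le_div_iff₀ (hpos t ht)] at hderiv
    rw [norm_smul, mul_div_left_comm]
    exact mul_le_mul_of_nonneg_left hderiv (norm_nonneg z)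
  simpa using image_norm_le_of_norm_deriv_right_le_deriv_boundary'
    (fun t ht => (hf t ht).continuousAt.continuousWithinAt)
    (fun t ht => (hf t (Ico_subset_Icc_self ht)).hasDerivWithinAt)
    (by simp) (fun t ht => (hB t ht).continuousAt.continuousWithinAt)
    (fun t ht => (hB t (Ico_subset_Icc_self ht)).hasDerivWithinAt)
    (fun t ht => hbound t (Ico_subset_Icc_self ht)) (right_mem_Icc.mpr zero_le_one)

theorem injOn_add_conj_of_norm_deriv_sub_one_add_norm_deriv_le {h g : ℂ → ℂ} {s : Set ℂ}
    {c : ℝ} (hs : Convex ℝ s) (hh : ∀ z ∈ s, DifferentiableAt ℂ h z)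
    (hg : ∀ z ∈ s, DifferentiableAt ℂ g z) (hc : c < 1)
    (hbound : ∀ z ∈ s, ‖deriv h z - 1‖ + ‖deriv g z‖ ≤ c) :
    InjOn (fun z => h z + conj (g z)) s := by
  intro z₁ hz₁ z₂ hz₂ heq
  set L : ℂ → ℂ →L[ℝ] ℂ := fun z =>
    (deriv h z - 1) • (1 : ℂ →L[ℝ] ℂ) +
      (conjCLE : ℂ →L[ℝ] ℂ).comp (deriv g z • (1 : ℂ →L[ℝ] ℂ))
  have hderiv : ∀ z ∈ s, HasFDerivAt (fun z => h z - z + conj (g z)) (L z) z :=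
    fun z hz => ((hh z hz).hasDerivAt.sub (hasDerivAt_id z)).complexToReal_fderiv.add
      (conjCLE.hasFDerivAt.comp z (hg z hz).hasDerivAt.complexToReal_fderiv)
  have hnorm : ∀ z ∈ s, ‖L z‖ ≤ c := fun z hz => calc
    ‖L z‖ ≤ ‖deriv h z - 1‖ * ‖(1 : ℂ →L[ℝ] ℂ)‖
        + ‖(conjCLE : ℂ →L[ℝ] ℂ)‖ * (‖deriv g z‖ * ‖(1 : ℂ →L[ℝ] ℂ)‖) :=
      (norm_add_le _ _).trans (add_le_add (ContinuousLinearMap.opNorm_smul_le _ _)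
        ((ContinuousLinearMap.opNorm_comp_le _ _).trans
          (by gcongr; exact ContinuousLinearMap.opNorm_smul_le _ _)))
    _ = ‖deriv h z - 1‖ + ‖deriv g z‖ := by rw [conjCLE_norm, norm_one]; ring
    _ ≤ c := hbound z hz
  have hlip := hs.norm_image_sub_le_of_norm_hasFDerivWithin_le
    (fun z hz => (hderiv z hz).hasFDerivWithinAt) hnorm hz₁ hz₂
  have hdiff : h z₂ - z₂ + conj (g z₂) - (h z₁ - z₁ + conj (g z₁)) = -(z₂ - z₁) := by
    simp only at heq
    linear_combination -heq
  rw [hdiff, norm_neg] at hlip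
  by_contra hne
  nlinarith [norm_pos_iff.mpr (sub_ne_zero.mpr (Ne.symm hne))]

theorem circleIntegral_one_div_sq_smul_conj_eq_zero {g : ℂ → ℂ} {r : ℝ} (hr : 0 < r)
    (hg : DifferentiableOn ℂ g (closedBall 0 r)) :
    ∮ z in C(0, r), (1 / (z - 0) ^ 2) • conj (g z) = 0 := by
  have hpoint : ∀ θ : ℝ, deriv (circleMap 0 r) θ • ((1 / (circleMap 0 r θ - 0) ^ 2) •
      conj (g (circleMap 0 r θ))) =
      -(1 / (r : ℂ) ^ 2) * conj (deriv (circleMap 0 r) θ • g (circleMap 0 r θ)) := by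
    intro θ
    have hne : circleMap 0 r θ ≠ 0 := circleMap_ne_center hr.ne'
    have hconj : conj (circleMap 0 r θ) = r ^ 2 / circleMap 0 r θ := by
      rw [eq_div_iff hne, mul_comm, mul_conj', norm_circleMap_zero, abs_of_pos hr]
    simp only [deriv_circleMap, smul_eq_mul, map_mul, conj_I, hconj, sub_zero]
    have hr' : (r : ℂ) ≠ 0 := ofReal_ne_zero.mpr hr.ne'
    field_simp
  rw [circleIntegral]
  simp_rw [hpoint]
  rw [intervalIntegral.integral_const_mul, intervalIntegral.intervalIntegral_conj]
  change _ * conj (∮ z in C(0, r), g z) = 0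
  rw [(hg.mono closure_ball_subset_closedBall).diffContOnCl.circleIntegral_eq_zero hr.le]
  simp

theorem norm_deriv_le_of_norm_add_conj_le {h g : ℂ → ℂ} {r C : ℝ} (hr : 0 < r)
    (hh : DifferentiableOn ℂ h (closedBall 0 r)) (hg : DifferentiableOn ℂ g (closedBall 0 r))
    (hC : ∀ z ∈ sphere (0 : ℂ) r, ‖h z + conj (g z)‖ ≤ C) : ‖deriv h 0‖ ≤ C / r := by
  have hint : ∀ F : ℂ → ℂ, ContinuousOn F (closedBall 0 r) →
      CircleIntegrable (fun z => (1 / (z - 0) ^ 2) • F z) 0 r := fun F hF =>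
    ((continuousOn_const.div (by fun_prop) fun z hz => pow_ne_zero 2
      (sub_ne_zero.mpr (ne_of_mem_sphere hz hr.ne'))).smul
      (hF.mono sphere_subset_closedBall)).circleIntegrable hr.le
  have hcauchy : ∮ z in C(0, r), (1 / (z - 0) ^ 2) • (h z + conj (g z)) =
      (2 * Real.pi * I) • deriv h 0 := by
    simp_rw [smul_add]
    rw [circleIntegral.integral_add (hint h hh.continuousOn)
      (hint (fun z => conj (g z)) (continuous_conj.comp_continuousOn hg.continuousOn)),
      hh.deriv_eq_smul_circleIntegral hr, circleIntegral_one_div_sq_smul_conj_eq_zero hr hg,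
      add_zero]
  have hsphere : ∀ z ∈ sphere (0 : ℂ) r,
      ‖(1 / (z - 0) ^ 2) • (h z + conj (g z))‖ ≤ C / r ^ 2 := fun z hz => by
    rw [norm_smul, norm_div, norm_one, norm_pow, sub_zero, mem_sphere_zero_iff_norm.mp hz,
      one_div, ← div_eq_inv_mul]
    exact div_le_div_of_nonneg_right (hC z hz) (by positivity)
  have hest := circleIntegral.norm_integral_le_of_norm_le_const hr.le hsphere
  have hrhs : 2 * Real.pi * r * (C / r ^ 2) = 2 * Real.pi * (C / r) := by field_simp
  rw [hcauchy, norm_smul, norm_mul, norm_mul, norm_I, RCLike.norm_two, norm_real,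
    Real.norm_of_nonneg Real.pi_pos.le, mul_one, hrhs] at hest
  exact le_of_mul_le_mul_left hest Real.two_pi_pos

theorem one_le_of_deriv_eq_one_of_norm_add_conj_lt {h g : ℂ → ℂ} {M : ℝ}
    (hh : DifferentiableOn ℂ h (ball 0 1)) (hg : DifferentiableOn ℂ g (ball 0 1))
    (hh1 : deriv h 0 = 1) (hbound : ∀ z ∈ ball (0 : ℂ) 1, ‖h z + conj (g z)‖ < M) : 1 ≤ M := by
  refine le_of_forall_lt_imp_le_of_dense fun r hr1 => ?_
  rcases le_or_gt r 0 with hr0 | hr0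
  · exact hr0.trans ((norm_nonneg _).trans (hbound 0 (mem_ball_self one_pos)).le)
  · have hsub : closedBall (0 : ℂ) r ⊆ ball 0 1 := closedBall_subset_ball hr1
    have hest := norm_deriv_le_of_norm_add_conj_le hr0 (hh.mono hsub) (hg.mono hsub)
      fun z hz => (hbound z (hsub (sphere_subset_closedBall hz))).le
    rwa [hh1, norm_one, le_div_iff₀ hr0, one_mul] at hest

theorem norm_deriv_sub_one_add_norm_deriv_le_of_neg_lt_re {h g : ℂ → ℂ} {M : ℝ} (hM : 0 < M)
    (hh : DifferentiableOn ℂ h (ball 0 1)) (hg : DifferentiableOn ℂ g (ball 0 1))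
    (hh1 : deriv h 0 = 1) (hg1 : deriv g 0 = 0)
    (hclass : ∀ z ∈ ball (0 : ℂ) 1, -M + ‖z * deriv (deriv g) z‖ < (z * deriv (deriv h) z).re)
    {z : ℂ} (hz : z ∈ ball 0 1) :
    ‖deriv h z - 1‖ + ‖deriv g z‖ ≤ 2 * M * -Real.log (1 - ‖z‖) := by
  obtain ⟨u, hu, hsum⟩ := exists_norm_eq_one_norm_add_mul_eq_add_norm (deriv h z - 1) (deriv g z)
  have hh' := hh.deriv isOpen_ball
  have hg' := hg.deriv isOpen_ball
  set φ : ℂ → ℂ := fun w => deriv h w - 1 + u * deriv g w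
  have hφ : DifferentiableOn ℂ φ (ball 0 1) := (hh'.sub_const 1).add (hg'.const_mul u)
  have hφ' : ∀ w ∈ ball (0 : ℂ) 1, deriv φ w = deriv (deriv h) w + u * deriv (deriv g) w :=
    fun w hw => by
      have hw' := isOpen_ball.mem_nhds hw
      exact (((hh'.differentiableAt hw').hasDerivAt.sub_const 1).add
        ((hg'.differentiableAt hw').hasDerivAt.const_mul u)).deriv
  have hre : ∀ w ∈ ball (0 : ℂ) 1, -M < (w * deriv φ w).re := fun w hw => by
    have hrot : -‖w * deriv (deriv g) w‖ ≤ (u * (w * deriv (deriv g) w)).re := by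
      refine (neg_le_neg ((abs_re_le_norm _).trans_eq ?_)).trans (neg_abs_le _)
      rw [norm_mul, hu, one_mul]
    rw [hφ' w hw, mul_add, add_re, mul_left_comm]
    linarith [hclass w hw]
  have hφz := norm_sub_le_mul_neg_log_of_norm_deriv_mul_le hφ
    (fun w hw => norm_deriv_mul_one_sub_norm_le_of_neg_lt_re hM hφ hre hw) hz
  simpa [φ, hh1, hg1, hsum] using hφz

theorem landau_P0HM_univalence_general (M : ℝ) (hM : 0 < M) (h g : ℂ → ℂ)
    (hh : DifferentiableOn ℂ h (Metric.ball 0 1))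
    (hg : DifferentiableOn ℂ g (Metric.ball 0 1))
    (hh1 : deriv h 0 = 1)
    (hg1 : deriv g 0 = 0)
    (hclass : ∀ z ∈ Metric.ball (0:ℂ) 1,
      (z * deriv (deriv h) z).re > -M + ‖z * deriv (deriv g) z‖)
    (hbound : ∀ z ∈ Metric.ball (0:ℂ) 1,
      ‖h z + starRingEnd ℂ (g z)‖ < M) :
    Set.InjOn (fun z => h z + starRingEnd ℂ (g z))
      (Metric.ball 0 (1 - Real.exp (-(Real.pi / (8 * M ^ 2))))) := by
  have hM1 : 1 ≤ M := one_le_of_deriv_eq_one_of_norm_add_conj_lt hh hg hh1 hbound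
  have hρ₁ : ball (0 : ℂ) (1 - Real.exp (-(Real.pi / (8 * M ^ 2)))) ⊆ ball 0 1 :=
    ball_subset_ball (by linarith [Real.exp_pos (-(Real.pi / (8 * M ^ 2)))])
  refine injOn_add_conj_of_norm_deriv_sub_one_add_norm_deriv_le (convex_ball 0 _)
    (fun z hz => hh.differentiableAt (isOpen_ball.mem_nhds (hρ₁ hz)))
    (fun z hz => hg.differentiableAt (isOpen_ball.mem_nhds (hρ₁ hz)))
    (by linarith [Real.pi_lt_four] : Real.pi / 4 < 1) fun z hz => ?_
  have hexp : Real.exp (-(Real.pi / (8 * M ^ 2))) < 1 - ‖z‖ := by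
    linarith [mem_ball_zero_iff.mp hz]
  have hlog := (Real.lt_log_iff_exp_lt ((Real.exp_pos _).trans hexp)).mpr hexp
  calc ‖deriv h z - 1‖ + ‖deriv g z‖ ≤ 2 * M * -Real.log (1 - ‖z‖) :=
        norm_deriv_sub_one_add_norm_deriv_le_of_neg_lt_re hM hh hg hh1 hg1 hclass (hρ₁ hz)
    _ ≤ 2 * M * (Real.pi / (8 * M ^ 2)) := by gcongr; linarith
    _ = Real.pi / (4 * M) := by field_simp; ring
    _ ≤ Real.pi / 4 := by gcongr; linarith

/-- Landau-type theorem for the class `P⁰_H(M)`: univalence radius.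
`f = h + conj g` with `h, g` analytic on the unit disc, normalized by
`h(0) = 0`, `h'(0) = 1`, `g(0) = 0`, `g'(0) = 0`, satisfying
`Re (z h''(z)) > -M + |z g''(z)|` on the disc and `|f| < M`.
Then `f` is injective on the disc of radius `ρ₁ = 1 - exp (-π/(8M²))`. -/
theorem landau_P0HM_univalence (M : ℝ) (hM : 0 < M) (h g : ℂ → ℂ)
    (hh : DifferentiableOn ℂ h (Metric.ball 0 1))
    (hg : DifferentiableOn ℂ g (Metric.ball 0 1))
    (hh0 : h 0 = 0) (hh1 : deriv h 0 = 1)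
    (hg0 : g 0 = 0) (hg1 : deriv g 0 = 0)
    (hclass : ∀ z ∈ Metric.ball (0:ℂ) 1,
      (z * deriv (deriv h) z).re > -M + ‖z * deriv (deriv g) z‖)
    (hbound : ∀ z ∈ Metric.ball (0:ℂ) 1,
      ‖h z + starRingEnd ℂ (g z)‖ < M) :
    Set.InjOn (fun z => h z + starRingEnd ℂ (g z))
      (Metric.ball 0 (1 - Real.exp (-(Real.pi / (8 * M ^ 2))))) :=
  landau_P0HM_univalence_general M hM h g hh hg hh1 hg1 hclass hbound
end

section
/- Let M > 0 and let f = h + conj(g) be a harmonic mapping in the class P⁰_H(M) such that |f(z)| < M for all z ∈ D. Then for every r ∈ (0, 1) and all points z₁, z₂ with |z₁| < r and |z₂| < r, one has |f(z₁) − f(z₂)| ≥ |z₁ − z₂| · ( π/(4M) + 2M·ln(1 − r) ). -/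
/-!
For every unimodular `ε`, the analytic function `F = h + ε g` satisfies `Re (z F''(z)) > -M`, so
Borel–Carathéodory bounds `|F''(z)| ≤ 2M / (1 - |z|)`; integrating along `[0, z]` gives
`Re F'(z) ≥ 1 + 2M ln (1 - |z|)`, i.e. `Re h' - |g'| ≥ 1 + 2M ln (1 - r)` on `|z| < r`.
Taking `ε = δ / conj δ` with `δ = z₁ - z₂` makes `Re (conj δ (f z₁ - f z₂))` equal to
`Re (conj δ (F z₁ - F z₂))`, which is at least `(1 + 2M ln (1 - r)) |δ|²` by integrating `Re F'`
along the segment. Finally `π / (4M) ≤ 1` because `M ≥ |h'(0)| = 1`: in the Cauchy integral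
`∮ f(z) / z² dz` the antiholomorphic part `conj g` contributes nothing.
-/

open Metric Set Complex ComplexConjugate Filter Topology

theorem circleIntegral_one_div_sub_sq_smul_conj (ψ : ℂ → ℂ) (c : ℂ) (R : ℝ) :
    (∮ z in C(c, R), (1 / (z - c) ^ 2) • conj (ψ z)) =
      -((R : ℂ) ^ 2)⁻¹ * conj (∮ z in C(c, R), ψ z) := by
  simp only [circleIntegral, ← intervalIntegral.intervalIntegral_conj,
    ← intervalIntegral.integral_const_mul]
  congr 1; ext θ
  rcases eq_or_ne R 0 with rfl | hR
  · simp
  have hconj : conj (cexp (θ * I)) = (cexp (θ * I))⁻¹ := by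
    rw [← exp_conj, ← exp_neg]; simp
  have := exp_ne_zero (θ * I)
  simp only [deriv_circleMap, circleMap, smul_eq_mul, map_mul, hconj, conj_ofReal, conj_I,
    zero_add, add_sub_cancel_left]
  field_simp

theorem circleIntegral_one_div_sq_smul_add_conj {h g : ℂ → ℂ} {ρ : ℝ} (hρ : 0 < ρ)
    (hh : DifferentiableOn ℂ h (closedBall 0 ρ)) (hg : DifferentiableOn ℂ g (closedBall 0 ρ)) :
    (∮ z in C(0, ρ), (1 / (z - 0) ^ 2) • (h z + conj (g z))) = (2 * Real.pi * I) • deriv h 0 := by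
  have hinv : ContinuousOn (fun z : ℂ => 1 / (z - 0) ^ 2) (sphere 0 ρ) :=
    continuousOn_const.div (by fun_prop) fun z hz => by simp [ne_of_mem_sphere hz hρ.ne']
  have hg0 : (∮ z in C(0, ρ), g z) = 0 :=
    (hg.mono closure_ball_subset_closedBall).diffContOnCl.circleIntegral_eq_zero hρ.le
  simp_rw [smul_add]
  rw [circleIntegral.integral_add, hh.deriv_eq_smul_circleIntegral hρ,
    circleIntegral_one_div_sub_sq_smul_conj, hg0]
  · simp
  · exact (hinv.smul (hh.continuousOn.mono sphere_subset_closedBall)).circleIntegrable hρ.le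
  · exact (hinv.smul (continuous_conj.comp_continuousOn
      (hg.continuousOn.mono sphere_subset_closedBall))).circleIntegrable hρ.le

theorem norm_deriv_zero_le_of_norm_add_conj_le {h g : ℂ → ℂ} {M : ℝ}
    (hh : DifferentiableOn ℂ h (ball 0 1)) (hg : DifferentiableOn ℂ g (ball 0 1))
    (hbound : ∀ z ∈ ball (0 : ℂ) 1, ‖h z + conj (g z)‖ ≤ M) :
    ‖deriv h 0‖ ≤ M := by
  have hρ : ∀ ρ ∈ Ioo (0 : ℝ) 1, ρ * ‖deriv h 0‖ ≤ M := by
    rintro ρ ⟨hρ0, hρ1⟩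
    have hsub : closedBall (0 : ℂ) ρ ⊆ ball 0 1 := closedBall_subset_ball hρ1
    have hnorm := circleIntegral.norm_integral_le_of_norm_le_const (C := M / ρ ^ 2) hρ0.le
      (f := fun z => (1 / (z - 0) ^ 2) • (h z + conj (g z))) fun z hz => by
        have hz' := hsub (sphere_subset_closedBall hz)
        rw [mem_sphere_zero_iff_norm] at hz
        rw [norm_smul, norm_div, norm_one, norm_pow, sub_zero, hz, one_div_mul_eq_div]
        exact div_le_div_of_nonneg_right (hbound z hz') (by positivity)
    rw [circleIntegral_one_div_sq_smul_add_conj hρ0 (hh.mono hsub) (hg.mono hsub), norm_smul,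
      show ‖(2 * Real.pi * I : ℂ)‖ = 2 * Real.pi by simp [Real.pi_pos.le]] at hnorm
    have : 2 * Real.pi * (ρ * ‖deriv h 0‖) ≤ 2 * Real.pi * M := by
      have := mul_le_mul_of_nonneg_left hnorm hρ0.le
      field_simp at this ⊢
      linarith
    exact le_of_mul_le_mul_left this (by positivity)
  have hlim : Tendsto (fun ρ : ℝ => ρ * ‖deriv h 0‖) (𝓝[<] 1) (𝓝 (1 * ‖deriv h 0‖)) :=
    (continuous_id.mul continuous_const).continuousWithinAt.tendsto
  rw [one_mul] at hlim
  exact le_of_tendsto hlim (eventually_of_mem (Ioo_mem_nhdsLT one_pos) hρ)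

theorem eqOn_deriv_add_const_mul {U : Set ℂ} (hU : IsOpen U) {f g : ℂ → ℂ}
    (hf : DifferentiableOn ℂ f U) (hg : DifferentiableOn ℂ g U) (a : ℂ) :
    EqOn (deriv fun z => f z + a * g z) (fun z => deriv f z + a * deriv g z) U := fun z hz => by
  have hfz := hf.differentiableAt (hU.mem_nhds hz)
  have hgz := hg.differentiableAt (hU.mem_nhds hz)
  exact (hfz.hasDerivAt.add (hgz.hasDerivAt.const_mul a)).deriv

theorem norm_deriv_deriv_le {F : ℂ → ℂ} {M : ℝ} (hM : 0 < M)
    (hF : DifferentiableOn ℂ F (ball 0 1))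
    (hre : ∀ z ∈ ball (0 : ℂ) 1, -M < (z * deriv (deriv F) z).re) {w : ℂ}
    (hw : w ∈ ball (0 : ℂ) 1) : ‖deriv (deriv F) w‖ ≤ 2 * M / (1 - ‖w‖) := by
  have hF'' : DifferentiableOn ℂ (deriv (deriv F)) (ball 0 1) :=
    (hF.deriv isOpen_ball).deriv isOpen_ball
  have hpunct : ∀ z ∈ ball (0 : ℂ) 1, z ≠ 0 → ‖deriv (deriv F) z‖ ≤ 2 * M / (1 - ‖z‖) := by
    intro z hz hz0
    have hbc := borelCaratheodory_zero (f := fun z => -(z * deriv (deriv F) z)) hM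
      (differentiableOn_id.mul hF'').neg
      (fun x hx => by simp only [mem_ofPred_eq, neg_re]; linarith [hre x hx]) one_pos hz (by simp)
    rw [norm_neg, norm_mul, mul_comm (2 * M), mul_div_assoc] at hbc
    exact le_of_mul_le_mul_left hbc (norm_pos_iff.2 hz0)
  rcases ne_or_eq w 0 with hw0 | rfl
  · exact hpunct w hw hw0
  have hlhs : Tendsto (fun z => ‖deriv (deriv F) z‖) (𝓝[≠] 0) (𝓝 ‖deriv (deriv F) 0‖) :=
    ((hF''.continuousOn.continuousAt (isOpen_ball.mem_nhds hw)).norm).tendsto.mono_left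
      nhdsWithin_le_nhds
  have hrhs : Tendsto (fun z : ℂ => 2 * M / (1 - ‖z‖)) (𝓝[≠] 0) (𝓝 (2 * M / (1 - ‖(0 : ℂ)‖))) :=
    (ContinuousAt.tendsto (by fun_prop (disch := simp))).mono_left nhdsWithin_le_nhds
  refine le_of_tendsto_of_tendsto hlhs hrhs ?_
  filter_upwards [inter_mem_nhdsWithin _ (isOpen_ball.mem_nhds hw), self_mem_nhdsWithin]
    with z hz hz0 using hpunct z hz.2 hz0

theorem norm_deriv_sub_deriv_zero_le {F : ℂ → ℂ} {M : ℝ} (hM : 0 < M)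
    (hF : DifferentiableOn ℂ F (ball 0 1))
    (hre : ∀ z ∈ ball (0 : ℂ) 1, -M < (z * deriv (deriv F) z).re) {z : ℂ}
    (hz : z ∈ ball (0 : ℂ) 1) : ‖deriv F z - deriv F 0‖ ≤ -(2 * M * Real.log (1 - ‖z‖)) := by
  rw [mem_ball_zero_iff] at hz
  have hseg : ∀ t ∈ Icc (0 : ℝ) 1, (t : ℂ) * z ∈ ball (0 : ℂ) 1 ∧ ‖(t : ℂ) * z‖ = t * ‖z‖ := by
    intro t ht
    have hnorm : ‖(t : ℂ) * z‖ = t * ‖z‖ := by simp [abs_of_nonneg ht.1]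
    refine ⟨mem_ball_zero_iff.2 ?_, hnorm⟩
    rw [hnorm]
    nlinarith [ht.2, norm_nonneg z]
  have hpos : ∀ t ∈ Icc (0 : ℝ) 1, 0 < 1 - t * ‖z‖ := fun t ht => by
    nlinarith [ht.2, norm_nonneg z]
  have hf : ∀ t ∈ Icc (0 : ℝ) 1, HasDerivAt (fun t : ℝ => deriv F (t * z) - deriv F 0)
      (deriv (deriv F) (t * z) * z) t := by
    intro t ht
    have hF' := ((hF.deriv isOpen_ball).differentiableAt
      (isOpen_ball.mem_nhds (hseg t ht).1)).hasDerivAt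
    simpa using (hF'.comp (t : ℂ) ((hasDerivAt_id (t : ℂ)).mul_const z)).comp_ofReal.sub_const
      (deriv F 0)
  have hB : ∀ t ∈ Icc (0 : ℝ) 1, HasDerivAt (fun t => -(2 * M * Real.log (1 - t * ‖z‖)))
      (2 * M * ‖z‖ / (1 - t * ‖z‖)) t := by
    intro t ht
    refine (((((hasDerivAt_id t).mul_const ‖z‖).const_sub 1).log (hpos t ht).ne').const_mul
      (2 * M)).neg.congr_deriv ?_
    simp only [id, one_mul, neg_div, mul_neg, neg_neg]
    ring
  have := image_norm_le_of_norm_deriv_right_le_deriv_boundary' (a := 0) (b := 1)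
    (fun t ht => (hf t ht).continuousAt.continuousWithinAt)
    (fun t ht => (hf t (Ico_subset_Icc_self ht)).hasDerivWithinAt) (by simp)
    (fun t ht => (hB t ht).continuousAt.continuousWithinAt)
    (fun t ht => (hB t (Ico_subset_Icc_self ht)).hasDerivWithinAt) (fun t ht => by
      have ht' := Ico_subset_Icc_self ht
      calc ‖deriv (deriv F) (t * z) * z‖ = ‖deriv (deriv F) (t * z)‖ * ‖z‖ := norm_mul _ _
        _ ≤ 2 * M / (1 - ‖(t : ℂ) * z‖) * ‖z‖ :=
          mul_le_mul_of_nonneg_right (norm_deriv_deriv_le hM hF hre (hseg t ht').1) (norm_nonneg z)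
        _ = 2 * M * ‖z‖ / (1 - t * ‖z‖) := by rw [(hseg t ht').2]; ring)
    (right_mem_Icc.2 zero_le_one)
  simpa using this

theorem exists_norm_eq_one_mul_eq_neg_norm (w : ℂ) : ∃ ε : ℂ, ‖ε‖ = 1 ∧ ε * w = -‖w‖ := by
  refine ⟨-cexp (↑(-w.arg) * I), by rw [norm_neg, norm_exp_ofReal_mul_I], ?_⟩
  conv_lhs => rw [← norm_mul_exp_arg_mul_I w]
  rw [neg_mul, mul_left_comm, ← exp_add]
  simp

theorem one_add_two_mul_log_le_re_deriv_sub_norm_deriv {h g : ℂ → ℂ} {M : ℝ} (hM : 0 < M)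
    (hh : DifferentiableOn ℂ h (ball 0 1)) (hg : DifferentiableOn ℂ g (ball 0 1))
    (hh1 : deriv h 0 = 1) (hg1 : deriv g 0 = 0)
    (hclass : ∀ z ∈ ball (0 : ℂ) 1, -M + ‖z * deriv (deriv g) z‖ < (z * deriv (deriv h) z).re)
    {z : ℂ} (hz : z ∈ ball (0 : ℂ) 1) :
    1 + 2 * M * Real.log (1 - ‖z‖) ≤ (deriv h z).re - ‖deriv g z‖ := by
  obtain ⟨ε, hε, hεg⟩ := exists_norm_eq_one_mul_eq_neg_norm (deriv g z)
  set F := fun z => h z + ε * g z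
  have hF : DifferentiableOn ℂ F (ball 0 1) := hh.add (hg.const_mul ε)
  have hF' := eqOn_deriv_add_const_mul isOpen_ball hh hg ε
  have hF'' : EqOn (deriv (deriv F)) (fun z => deriv (deriv h) z + ε * deriv (deriv g) z)
      (ball 0 1) := fun w hw => by
    rw [(eventuallyEq_of_mem (isOpen_ball.mem_nhds hw) hF').deriv_eq]
    exact eqOn_deriv_add_const_mul isOpen_ball (hh.deriv isOpen_ball) (hg.deriv isOpen_ball) ε hw
  have hre : ∀ w ∈ ball (0 : ℂ) 1, -M < (w * deriv (deriv F) w).re := fun w hw => by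
    have hbound : -‖w * deriv (deriv g) w‖ ≤ (ε * (w * deriv (deriv g) w)).re := by
      simpa [hε] using neg_le_of_abs_le (abs_re_le_norm (ε * (w * deriv (deriv g) w)))
    rw [hF'' hw, mul_add, mul_left_comm, add_re]
    linarith [hclass w hw]
  have hest := norm_deriv_sub_deriv_zero_le hM hF hre hz
  rw [hF' hz, hF' (mem_ball_self one_pos)] at hest
  simp only [hh1, hg1, mul_zero, add_zero] at hest
  have hlow := neg_le_of_abs_le (abs_re_le_norm (deriv h z + ε * deriv g z - 1))
  rw [hεg] at hest hlow
  simp only [sub_re, add_re, one_re, neg_re, ofReal_re] at hlow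
  linarith

theorem mul_norm_sub_sq_le_re_conj_mul_sub {F : ℂ → ℂ} {s : Set ℂ} {c : ℝ} (hs : Convex ℝ s)
    (hso : IsOpen s) (hF : DifferentiableOn ℂ F s) (hc : ∀ w ∈ s, c ≤ (deriv F w).re)
    {z₁ z₂ : ℂ} (h₁ : z₁ ∈ s) (h₂ : z₂ ∈ s) :
    c * ‖z₁ - z₂‖ ^ 2 ≤ (conj (z₁ - z₂) * (F z₁ - F z₂)).re := by
  set δ := z₁ - z₂
  have hseg : ∀ t ∈ Icc (0 : ℝ) 1, z₂ + t * δ ∈ s := fun t ht => by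
    simpa [real_smul] using hs.add_smul_sub_mem h₂ h₁ ht
  have hφ : ∀ t ∈ Icc (0 : ℝ) 1, HasDerivAt (fun t : ℝ => (conj δ * F (z₂ + t * δ)).re)
      (‖δ‖ ^ 2 * (deriv F (z₂ + t * δ)).re) t := by
    intro t ht
    have hFt := (hF.differentiableAt (hso.mem_nhds (hseg t ht))).hasDerivAt
    have := ((hFt.comp (t : ℂ) (((hasDerivAt_id (t : ℂ)).mul_const δ).const_add z₂)).const_mul
      (conj δ)).real_of_complex
    refine this.congr_deriv ?_
    rw [one_mul, mul_left_comm, conj_mul', mul_comm, ← ofReal_pow, re_ofReal_mul]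
  have hmono := (convex_Icc (0 : ℝ) 1).mul_sub_le_image_sub_of_le_deriv
    (fun t ht => (hφ t ht).continuousAt.continuousWithinAt)
    (fun t ht => (hφ t (interior_subset ht)).differentiableAt.differentiableWithinAt)
    (C := c * ‖δ‖ ^ 2) (fun t ht => by
      rw [(hφ t (interior_subset ht)).deriv, mul_comm]
      exact mul_le_mul_of_nonneg_left (hc _ (hseg t (interior_subset ht))) (by positivity))
    0 (left_mem_Icc.2 zero_le_one) 1 (right_mem_Icc.2 zero_le_one) zero_le_one
  simpa [δ, mul_sub] using hmono

theorem mul_le_norm_add_conj_sub {h g : ℂ → ℂ} {s : Set ℂ} {c : ℝ} (hs : Convex ℝ s)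
    (hso : IsOpen s) (hh : DifferentiableOn ℂ h s) (hg : DifferentiableOn ℂ g s)
    (hc : ∀ w ∈ s, c ≤ (deriv h w).re - ‖deriv g w‖) {z₁ z₂ : ℂ} (h₁ : z₁ ∈ s) (h₂ : z₂ ∈ s) :
    ‖z₁ - z₂‖ * c ≤ ‖(h z₁ + conj (g z₁)) - (h z₂ + conj (g z₂))‖ := by
  rcases eq_or_ne z₁ z₂ with rfl | hne
  · simp
  set δ := z₁ - z₂
  have hδ : δ ≠ 0 := sub_ne_zero.2 hne
  have hδ' : conj δ ≠ 0 := (map_ne_zero _).2 hδ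
  set ε := δ / conj δ
  have hε : ‖ε‖ = 1 := by rw [norm_div, norm_conj, div_self (norm_ne_zero_iff.2 hδ)]
  have hcF : ∀ w ∈ s, c ≤ (deriv (fun z => h z + ε * g z) w).re := fun w hw => by
    have := neg_le_of_abs_le (abs_re_le_norm (ε * deriv g w))
    rw [norm_mul, hε, one_mul] at this
    rw [eqOn_deriv_add_const_mul hso hh hg ε hw, add_re]
    linarith [hc w hw]
  have hkey : c * ‖δ‖ ^ 2 ≤ (conj δ * ((h z₁ + ε * g z₁) - (h z₂ + ε * g z₂))).re :=
    mul_norm_sub_sq_le_re_conj_mul_sub hs hso (hh.add (hg.const_mul ε)) hcF h₁ h₂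
  have hre : (conj δ * ((h z₁ + ε * g z₁) - (h z₂ + ε * g z₂))).re =
      (conj δ * ((h z₁ + conj (g z₁)) - (h z₂ + conj (g z₂)))).re := by
    have hεδ : conj δ * ε = δ := mul_div_cancel₀ δ hδ'
    have e₁ : conj δ * ((h z₁ + ε * g z₁) - (h z₂ + ε * g z₂)) =
        conj δ * (h z₁ - h z₂) + δ * (g z₁ - g z₂) := by
      linear_combination (g z₁ - g z₂) * hεδ
    have e₂ : conj δ * ((h z₁ + conj (g z₁)) - (h z₂ + conj (g z₂))) =
        conj δ * (h z₁ - h z₂) + conj (δ * (g z₁ - g z₂)) := by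
      simp only [map_mul, map_sub]; ring
    rw [e₁, e₂, add_re, add_re, conj_re]
  have hupper := re_le_norm (conj δ * ((h z₁ + conj (g z₁)) - (h z₂ + conj (g z₂))))
  rw [← hre, norm_mul, norm_conj] at hupper
  have hpos : 0 < ‖δ‖ := norm_pos_iff.2 hδ
  nlinarith

theorem landau_P0HM_lowerBound_general (M : ℝ) (hM : 0 < M) (h g : ℂ → ℂ)
    (hh : DifferentiableOn ℂ h (Metric.ball 0 1))
    (hg : DifferentiableOn ℂ g (Metric.ball 0 1))
    (hh1 : deriv h 0 = 1)
    (hg1 : deriv g 0 = 0)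
    (hclass : ∀ z ∈ Metric.ball (0:ℂ) 1,
      (z * deriv (deriv h) z).re > -M + ‖z * deriv (deriv g) z‖)
    (hbound : ∀ z ∈ Metric.ball (0:ℂ) 1,
      ‖h z + starRingEnd ℂ (g z)‖ < M) :
    ∀ r ∈ Set.Ioo (0:ℝ) 1, ∀ z₁ z₂ : ℂ, ‖z₁‖ < r → ‖z₂‖ < r →
      ‖(h z₁ + starRingEnd ℂ (g z₁)) - (h z₂ + starRingEnd ℂ (g z₂))‖ ≥
        ‖z₁ - z₂‖ * (Real.pi / (4 * M) + 2 * M * Real.log (1 - r)) := by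
  intro r hr z₁ z₂ h₁ h₂
  have hM1 : 1 ≤ M := by
    simpa [hh1] using norm_deriv_zero_le_of_norm_add_conj_le hh hg fun z hz => (hbound z hz).le
  have hsub : ball (0 : ℂ) r ⊆ ball 0 1 := ball_subset_ball hr.2.le
  refine mul_le_norm_add_conj_sub (convex_ball 0 r) isOpen_ball (hh.mono hsub) (hg.mono hsub)
    (fun w hw => ?_) (mem_ball_zero_iff.2 h₁) (mem_ball_zero_iff.2 h₂)
  have hwr : ‖w‖ ≤ r := (mem_ball_zero_iff.1 hw).le
  calc Real.pi / (4 * M) + 2 * M * Real.log (1 - r)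
      ≤ 1 + 2 * M * Real.log (1 - ‖w‖) := by
        gcongr
        · exact div_le_one_of_le₀ (by linarith [Real.pi_le_four]) (by positivity)
        · linarith [hr.2]
    _ ≤ (deriv h w).re - ‖deriv g w‖ :=
        one_add_two_mul_log_le_re_deriv_sub_norm_deriv hM hh hg hh1 hg1 hclass (hsub hw)

/-- Distance-distortion lower bound for the class `P⁰_H(M)`:
for `r ∈ (0,1)` and `|z₁|, |z₂| < r`,
`|f(z₁) - f(z₂)| ≥ |z₁ - z₂| (π/(4M) + 2M ln(1-r))`. -/
theorem landau_P0HM_lowerBound (M : ℝ) (hM : 0 < M) (h g : ℂ → ℂ)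
    (hh : DifferentiableOn ℂ h (Metric.ball 0 1))
    (hg : DifferentiableOn ℂ g (Metric.ball 0 1))
    (hh0 : h 0 = 0) (hh1 : deriv h 0 = 1)
    (hg0 : g 0 = 0) (hg1 : deriv g 0 = 0)
    (hclass : ∀ z ∈ Metric.ball (0:ℂ) 1,
      (z * deriv (deriv h) z).re > -M + ‖z * deriv (deriv g) z‖)
    (hbound : ∀ z ∈ Metric.ball (0:ℂ) 1,
      ‖h z + starRingEnd ℂ (g z)‖ < M) :
    ∀ r ∈ Set.Ioo (0:ℝ) 1, ∀ z₁ z₂ : ℂ, ‖z₁‖ < r → ‖z₂‖ < r →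
      ‖(h z₁ + starRingEnd ℂ (g z₁)) - (h z₂ + starRingEnd ℂ (g z₂))‖ ≥
        ‖z₁ - z₂‖ * (Real.pi / (4 * M) + 2 * M * Real.log (1 - r)) :=
  landau_P0HM_lowerBound_general M hM h g hh hg hh1 hg1 hclass hbound
end

section
/- Let M > 0, set ρ₁ = 1 − exp(−π/(8M²)), and define F₁ on the unit disc D by F₁(z) = (π/(4M))·z − 2M·( z + (1 − z)·Log(1 − z) ), where Log is the principal branch of the complex logarithm. Then for every r with ρ₁ < r ≤ 1 there exist z₁ ≠ z₂ in D_r with F₁(z₁) = F₁(z₂); that is, F₁ is not injective on D_r for any r ∈ (ρ₁, 1]. Hence the univalence radius ρ₁ in the Landau-type theorem for P⁰_H(M) is sharp. -/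
/-!
On the real segment `[0, 1)` the extremal function is real-valued, equal to
`g(x) = a x - b (x + (1 - x) log (1 - x))` with `a = π/(4M)`, `b = 2M`, and
`g'(x) = a + b log (1 - x)` changes sign exactly at `ρ₁ = 1 - exp (-a/b) = 1 - exp (-π/(8M²))`.
So `g` increases on `[0, ρ₁]` and decreases on `[ρ₁, 1)`; for `ρ₁ < x < 1` the value `g ρ₁`
exceeds both `g 0` and `g x`, and a continuous function on `[0, x]` with an interior peak is not
injective there.
-/

open Real Set

theorem ContinuousOn.not_injOn_Icc_of_lt_of_lt {α δ : Type*} [ConditionallyCompleteLinearOrder α]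
    [DenselyOrdered α] [TopologicalSpace α] [OrderTopology α] [LinearOrder δ] [TopologicalSpace δ]
    [OrderClosedTopology δ] {f : α → δ} {a b c : α} (hab : a < b) (hbc : b < c)
    (hf : ContinuousOn f (Icc a c)) (hfab : f a < f b) (hfcb : f c < f b) :
    ¬ InjOn f (Icc a c) := by
  intro hinj
  have ha : a ∈ Icc a c := left_mem_Icc.2 (hab.trans hbc).le
  have hb : b ∈ Icc a c := ⟨hab.le, hbc.le⟩
  have hc : c ∈ Icc a c := right_mem_Icc.2 (hab.trans hbc).le
  rcases hf.strictMonoOn_of_injOn_Icc' (hab.trans hbc).le hinj with hmono | hanti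
  · exact (hmono hb hc hbc).not_gt hfcb
  · exact (hanti ha hb hab).not_gt hfab

theorem hasDerivAt_add_one_sub_mul_log {x : ℝ} (hx : x ≠ 1) :
    HasDerivAt (fun x => x + (1 - x) * log (1 - x)) (-log (1 - x)) x := by
  have hx' : 1 - x ≠ 0 := sub_ne_zero.2 hx.symm
  have hsub := (hasDerivAt_id' x).const_sub 1
  refine ((hasDerivAt_id' x).add (hsub.mul (hsub.log hx'))).congr_deriv ?_
  field_simp
  ring

noncomputable def extremalReal (a b x : ℝ) : ℝ :=
  a * x - b * (x + (1 - x) * log (1 - x))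

section extremalReal

variable {a b : ℝ}

theorem hasDerivAt_extremalReal {x : ℝ} (hx : x ≠ 1) :
    HasDerivAt (extremalReal a b) (a + b * log (1 - x)) x :=
  (((hasDerivAt_id' x).const_mul a).sub
    ((hasDerivAt_add_one_sub_mul_log hx).const_mul b)).congr_deriv (by ring)

theorem continuousOn_extremalReal : ContinuousOn (extremalReal a b) {1}ᶜ := fun _ hx =>
  (hasDerivAt_extremalReal hx).continuousAt.continuousWithinAt

theorem strictMonoOn_extremalReal (hb : 0 < b) :
    StrictMonoOn (extremalReal a b) (Iic (1 - exp (-(a / b)))) := by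
  have hρ1 : 1 - exp (-(a / b)) < 1 := sub_lt_self 1 (exp_pos _)
  refine strictMonoOn_of_deriv_pos (convex_Iic _)
    (continuousOn_extremalReal.mono fun x hx => (hx.trans_lt hρ1).ne) fun x hx => ?_
  rw [interior_Iic] at hx
  rw [(hasDerivAt_extremalReal (hx.trans hρ1).ne).deriv]
  have hlog : -(a / b) < log (1 - x) :=
    (lt_log_iff_exp_lt (by linarith [hx.out])).2 (by linarith [hx.out])
  have := mul_lt_mul_of_pos_left hlog hb
  rw [mul_neg, mul_div_cancel₀ _ hb.ne'] at this
  linarith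

theorem strictAntiOn_extremalReal (hb : 0 < b) :
    StrictAntiOn (extremalReal a b) (Ico (1 - exp (-(a / b))) 1) := by
  refine strictAntiOn_of_deriv_neg (convex_Ico _ _)
    (continuousOn_extremalReal.mono fun x hx => hx.2.ne) fun x hx => ?_
  rw [interior_Ico] at hx
  rw [(hasDerivAt_extremalReal hx.2.ne).deriv]
  have hlog : log (1 - x) < -(a / b) :=
    (log_lt_iff_lt_exp (by linarith [hx.2])).2 (by linarith [hx.1])
  have := mul_lt_mul_of_pos_left hlog hb
  rw [mul_neg, mul_div_cancel₀ _ hb.ne'] at this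
  linarith

theorem not_injOn_extremalReal (ha : 0 < a) (hb : 0 < b) {x : ℝ}
    (hρx : 1 - exp (-(a / b)) < x) (hx : x < 1) :
    ¬ InjOn (extremalReal a b) (Icc 0 x) := by
  set ρ := 1 - exp (-(a / b))
  have hρ : 0 < ρ := sub_pos.2 (exp_lt_one_iff.2 (neg_neg_of_pos (div_pos ha hb)))
  refine ContinuousOn.not_injOn_Icc_of_lt_of_lt hρ hρx
    (continuousOn_extremalReal.mono fun y hy => (hy.2.trans_lt hx).ne) ?_ ?_
  · exact strictMonoOn_extremalReal hb hρ.le self_mem_Iic hρ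
  · exact strictAntiOn_extremalReal hb ⟨le_rfl, hρx.trans hx⟩ ⟨hρx.le, hx⟩ hρx

theorem ofReal_extremalReal {x : ℝ} (hx : x ≤ 1) :
    (extremalReal a b x : ℂ) = a * x - b * (x + (1 - x) * Complex.log (1 - x)) := by
  rw [extremalReal, ← Complex.ofReal_one, ← Complex.ofReal_sub,
    ← Complex.ofReal_log (sub_nonneg.2 hx)]
  push_cast
  ring

end extremalReal

/-- Sharpness of the univalence radius `ρ₁ = 1 - exp (-π/(8M²))` for the class
`P⁰_H(M)`: the extremal function
`F₁(z) = (π/(4M)) z - 2M (z + (1-z) Log(1-z))` is not injective on `D_r`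
for any `r ∈ (ρ₁, 1]`. -/
theorem landau_P0HM_sharpness (M : ℝ) (hM : 0 < M) :
    ∀ r : ℝ, 1 - Real.exp (-(Real.pi / (8 * M ^ 2))) < r → r ≤ 1 →
      ∃ z₁ ∈ Metric.ball (0:ℂ) r, ∃ z₂ ∈ Metric.ball (0:ℂ) r, z₁ ≠ z₂ ∧
        ((Real.pi / (4 * M) : ℝ) : ℂ) * z₁
            - ((2 * M : ℝ) : ℂ) * (z₁ + (1 - z₁) * Complex.log (1 - z₁)) =
          ((Real.pi / (4 * M) : ℝ) : ℂ) * z₂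
            - ((2 * M : ℝ) : ℂ) * (z₂ + (1 - z₂) * Complex.log (1 - z₂)) := by
  intro r hρr hr
  obtain ⟨x, hρx, hxr⟩ := exists_between hρr
  have hratio : Real.pi / (4 * M) / (2 * M) = Real.pi / (8 * M ^ 2) := by
    field_simp
    ring
  have hnot := not_injOn_extremalReal (a := Real.pi / (4 * M)) (b := 2 * M) (by positivity)
    (by positivity) (hratio ▸ hρx) (hxr.trans_le hr)
  simp only [InjOn, not_forall] at hnot
  obtain ⟨x₁, hx₁, x₂, hx₂, heq, hne⟩ := hnot
  have mem_ball {y : ℝ} (hy : y ∈ Icc 0 x) : (y : ℂ) ∈ Metric.ball (0 : ℂ) r := by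
    simpa [abs_of_nonneg hy.1] using hy.2.trans_lt hxr
  refine ⟨x₁, mem_ball hx₁, x₂, mem_ball hx₂, Complex.ofReal_injective.ne hne, ?_⟩
  rw [← ofReal_extremalReal (by linarith [hx₁.2]), ← ofReal_extremalReal (by linarith [hx₂.2]),
    heq]
end

section
/- Let M > 0, α ≥ 0, and let f = h + conj(g) be a harmonic mapping in the class W⁰_H(α) such that |f(z)| < M for all z ∈ D. Let ρ₂ ∈ (0, 1) be a root of the equation π/(4M) − 2·∑_{n=2}^∞ r^{n−1}/(αn + 1 − α) = 0. Then f is univalent (injective) on the disc D_{ρ₂}. -/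
open Set intervalIntegral

/-- Averaging representation: for `α > 0` and `F` analytic on the unit ball,
`F z = ∫₀¹ (F(s^α z) + α (s^α z) F'(s^α z)) ds`. -/
lemma avg_rep (α : ℝ) (hα : 0 < α) (F : ℂ → ℂ)
    (hF : AnalyticOnNhd ℂ F (Metric.ball 0 1)) (z : ℂ) (hz : z ∈ Metric.ball (0:ℂ) 1) :
    (∫ s in (0:ℝ)..1, (F (((s:ℝ) ^ α : ℝ) * z)
      + (α:ℂ) * ((((s:ℝ) ^ α : ℝ) : ℂ) * z) * deriv F ((((s:ℝ) ^ α : ℝ) : ℂ) * z))) = F z := by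
  have hz1 : ‖z‖ < 1 := by simpa using hz
  set w : ℝ → ℂ := fun s => ((s ^ α : ℝ) : ℂ) * z with hw
  have wmem : ∀ s ∈ Icc (0:ℝ) 1, w s ∈ Metric.ball (0:ℂ) 1 := by
    intro s hs
    have h1 : s ^ α ≤ 1 := Real.rpow_le_one hs.1 hs.2 hα.le
    have h0 : (0:ℝ) ≤ s ^ α := Real.rpow_nonneg hs.1 α
    have : ‖w s‖ = s ^ α * ‖z‖ := by
      simp [hw, abs_of_nonneg h0]
    rw [Metric.mem_ball, dist_zero_right, this]
    calc s ^ α * ‖z‖ ≤ 1 * ‖z‖ := by nlinarith [norm_nonneg z]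
      _ < 1 := by simpa
  have cw : Continuous w := by
    have : Continuous fun s : ℝ => s ^ α :=
      continuous_iff_continuousAt.2 fun x => Real.continuousAt_rpow_const x α (Or.inr hα.le)
    exact (Complex.continuous_ofReal.comp this).mul continuous_const
  have hF' : AnalyticOnNhd ℂ (deriv F) (Metric.ball 0 1) := hF.deriv
  have Pcont : ContinuousOn (fun v : ℂ => F v + (α:ℂ) * v * deriv F v) (Metric.ball 0 1) :=
    hF.continuousOn.add (((continuousOn_const.mul continuousOn_id).mul hF'.continuousOn))
  have icont : ContinuousOn (fun s : ℝ => F (w s) + (α:ℂ) * w s * deriv F (w s)) (Icc 0 1) :=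
    Pcont.comp cw.continuousOn wmem
  have hint : IntervalIntegrable
      (fun s : ℝ => F (w s) + (α:ℂ) * w s * deriv F (w s)) MeasureTheory.volume 0 1 := by
    apply ContinuousOn.intervalIntegrable
    rwa [uIcc_of_le (zero_le_one)]
  have hφcont : ContinuousOn (fun s : ℝ => (s:ℂ) * F (w s)) (Icc 0 1) :=
    (Complex.continuous_ofReal.continuousOn).mul (hF.continuousOn.comp cw.continuousOn wmem)
  have hderiv : ∀ s ∈ Ioo (0:ℝ) 1, HasDerivWithinAt (fun s : ℝ => (s:ℂ) * F (w s))
      (F (w s) + (α:ℂ) * w s * deriv F (w s)) (Ioi s) s := by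
    intro s hs
    have hs0 : s ≠ 0 := hs.1.ne'
    have hwd : HasDerivAt (fun s : ℝ => ((s ^ α : ℝ) : ℂ)) ((α * s ^ (α - 1) : ℝ) : ℂ) s :=
      (Real.hasDerivAt_rpow_const (Or.inl hs0)).ofReal_comp
    have hwz : HasDerivAt w (((α * s ^ (α - 1) : ℝ) : ℂ) * z) s := hwd.mul_const z
    have hFd : HasDerivAt F (deriv F (w s)) (w s) :=
      (hF (w s) (wmem s (Ioo_subset_Icc_self hs))).differentiableAt.hasDerivAt
    have hcomp : HasDerivAt (fun s : ℝ => F (w s))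
        ((((α * s ^ (α - 1) : ℝ) : ℂ) * z) • deriv F (w s)) s := by simpa [Function.comp_def] using HasDerivAt.scomp_of_eq s hFd hwz rfl
    have hid : HasDerivAt (fun s : ℝ => (s:ℂ)) 1 s := by
      simpa using (hasDerivAt_id s).ofReal_comp
    have := hid.mul hcomp
    have key : (1 : ℂ) * F (w s) + (s:ℂ) * ((((α * s ^ (α - 1) : ℝ) : ℂ) * z) • deriv F (w s))
        = F (w s) + (α:ℂ) * w s * deriv F (w s) := by
      have hss : s ^ (α - 1) * s = s ^ α := by
        rw [Real.rpow_sub_one hs0]; field_simp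
      rw [smul_eq_mul, hw]
      push_cast [← hss]
      ring
    rw [key] at this
    exact this.hasDerivWithinAt
  have := intervalIntegral.integral_eq_sub_of_hasDeriv_right_of_le zero_le_one hφcont hderiv hint
  rw [this]
  simp [hw, Real.one_rpow]

/-- Key pointwise estimate: membership in `W⁰_H(α)` forces `Re h' > |g'|` on the disc. -/
lemma key_ineq (α : ℝ) (hα : 0 ≤ α) (h g : ℂ → ℂ)
    (hh : DifferentiableOn ℂ h (Metric.ball 0 1))
    (hg : DifferentiableOn ℂ g (Metric.ball 0 1))
    (hclass : ∀ z ∈ Metric.ball (0:ℂ) 1,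
      (deriv h z + (α : ℂ) * z * deriv (deriv h) z).re >
        ‖deriv g z + (α : ℂ) * z * deriv (deriv g) z‖) :
    ∀ z ∈ Metric.ball (0:ℂ) 1, ‖deriv g z‖ < (deriv h z).re := by
  rcases eq_or_lt_of_le hα with hα0 | hα
  · intro z hz
    have := hclass z hz
    rw [← hα0] at this
    simpa using this
  intro z hz
  have hz1 : ‖z‖ < 1 := by simpa using hz
  have hHa : AnalyticOnNhd ℂ (deriv h) (Metric.ball 0 1) :=
    (hh.analyticOnNhd Metric.isOpen_ball).deriv
  have hGa : AnalyticOnNhd ℂ (deriv g) (Metric.ball 0 1) :=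
    (hg.analyticOnNhd Metric.isOpen_ball).deriv
  set w : ℝ → ℂ := fun s => ((s ^ α : ℝ) : ℂ) * z with hw
  have wmem : ∀ s ∈ Icc (0:ℝ) 1, w s ∈ Metric.ball (0:ℂ) 1 := by
    intro s hs
    have h1 : s ^ α ≤ 1 := Real.rpow_le_one hs.1 hs.2 hα.le
    have h0 : (0:ℝ) ≤ s ^ α := Real.rpow_nonneg hs.1 α
    have : ‖w s‖ = s ^ α * ‖z‖ := by simp [hw, abs_of_nonneg h0]
    rw [Metric.mem_ball, dist_zero_right, this]
    calc s ^ α * ‖z‖ ≤ 1 * ‖z‖ := by nlinarith [norm_nonneg z]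
      _ < 1 := by simpa
  have cw : Continuous w := by
    have : Continuous fun s : ℝ => s ^ α :=
      continuous_iff_continuousAt.2 fun x => Real.continuousAt_rpow_const x α (Or.inr hα.le)
    exact (Complex.continuous_ofReal.comp this).mul continuous_const
  -- the two integrands
  set P : ℝ → ℂ := fun s => deriv h (w s) + (α:ℂ) * w s * deriv (deriv h) (w s) with hP
  set Q : ℝ → ℂ := fun s => deriv g (w s) + (α:ℂ) * w s * deriv (deriv g) (w s) with hQ
  have Pcont : ContinuousOn P (Icc 0 1) :=
    (hHa.continuousOn.add ((continuousOn_const.mul continuousOn_id).mul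
      hHa.deriv.continuousOn)).comp cw.continuousOn wmem
  have Qcont : ContinuousOn Q (Icc 0 1) :=
    (hGa.continuousOn.add ((continuousOn_const.mul continuousOn_id).mul
      hGa.deriv.continuousOn)).comp cw.continuousOn wmem
  have Pint : IntervalIntegrable P MeasureTheory.volume 0 1 := by
    apply ContinuousOn.intervalIntegrable
    rwa [uIcc_of_le zero_le_one]
  have Qint : IntervalIntegrable Q MeasureTheory.volume 0 1 := by
    apply ContinuousOn.intervalIntegrable
    rwa [uIcc_of_le zero_le_one]
  have hrep : (∫ s in (0:ℝ)..1, P s) = deriv h z := avg_rep α hα (deriv h) hHa z hz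
  have grep : (∫ s in (0:ℝ)..1, Q s) = deriv g z := avg_rep α hα (deriv g) hGa z hz
  -- real part of the h-integral
  have hre : (deriv h z).re = ∫ s in (0:ℝ)..1, (P s).re := by
    rw [← hrep]
    exact (Complex.reCLM.intervalIntegral_comp_comm Pint).symm
  -- norm of the g-integral
  have gle : ‖deriv g z‖ ≤ ∫ s in (0:ℝ)..1, ‖Q s‖ := by
    rw [← grep]
    exact intervalIntegral.norm_integral_le_integral_norm zero_le_one
  -- strict positivity of the difference
  have hPQre : IntervalIntegrable (fun s => (P s).re) MeasureTheory.volume 0 1 := by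
    apply ContinuousOn.intervalIntegrable
    rw [uIcc_of_le zero_le_one]
    exact Complex.continuous_re.comp_continuousOn Pcont
  have hQn : IntervalIntegrable (fun s => ‖Q s‖) MeasureTheory.volume 0 1 := by
    apply ContinuousOn.intervalIntegrable
    rw [uIcc_of_le zero_le_one]
    exact Qcont.norm
  have hpos : 0 < ∫ s in (0:ℝ)..1, ((P s).re - ‖Q s‖) := by
    apply intervalIntegral_pos_of_pos_on (hPQre.sub hQn) _ zero_lt_one
    intro s hs
    have := hclass (w s) (wmem s (Ioo_subset_Icc_self hs))
    rw [sub_pos]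
    simpa [hP, hQ] using this
  rw [intervalIntegral.integral_sub hPQre hQn] at hpos
  calc ‖deriv g z‖ ≤ ∫ s in (0:ℝ)..1, ‖Q s‖ := gle
    _ < ∫ s in (0:ℝ)..1, (P s).re := by linarith
    _ = (deriv h z).re := hre.symm

/-- Landau-type theorem for the class `W⁰_H(α)`: univalence radius.
`f = h + conj g` with the normalization and the condition
`Re (h'(z) + α z h''(z)) > |g'(z) + α z g''(z)|` on the disc, `|f| < M`.
If `ρ₂ ∈ (0,1)` is a root of `π/(4M) - 2 ∑_{n≥2} r^{n-1}/(αn + 1 - α) = 0`,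
then `f` is injective on `D_{ρ₂}`. -/
theorem landau_W0Ha_univalence (M α : ℝ) (hM : 0 < M) (hα : 0 ≤ α)
    (h g : ℂ → ℂ)
    (hh : DifferentiableOn ℂ h (Metric.ball 0 1))
    (hg : DifferentiableOn ℂ g (Metric.ball 0 1))
    (hh0 : h 0 = 0) (hh1 : deriv h 0 = 1)
    (hg0 : g 0 = 0) (hg1 : deriv g 0 = 0)
    (hclass : ∀ z ∈ Metric.ball (0:ℂ) 1,
      (deriv h z + (α : ℂ) * z * deriv (deriv h) z).re >
        ‖deriv g z + (α : ℂ) * z * deriv (deriv g) z‖)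
    (hbound : ∀ z ∈ Metric.ball (0:ℂ) 1,
      ‖h z + starRingEnd ℂ (g z)‖ < M)
    (ρ₂ : ℝ) (hρ₂ : ρ₂ ∈ Set.Ioo (0:ℝ) 1)
    (hroot : Real.pi / (4 * M)
        - 2 * ∑' n : ℕ, ρ₂ ^ (n + 1) / (α * (n + 2) + 1 - α) = 0) :
    Set.InjOn (fun z => h z + starRingEnd ℂ (g z)) (Metric.ball 0 ρ₂) := by
  have hkey := key_ineq α hα h g hh hg hclass
  have hsub : Metric.ball (0:ℂ) ρ₂ ⊆ Metric.ball 0 1 := Metric.ball_subset_ball hρ₂.2.le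
  intro z₁ hz₁ z₂ hz₂ hfeq
  by_contra hne
  have hd : z₂ - z₁ ≠ 0 := sub_ne_zero.2 (Ne.symm hne)
  set γ : ℝ → ℂ := fun t => z₁ + (t:ℂ) * (z₂ - z₁) with hγ
  have hγmem : ∀ t ∈ Icc (0:ℝ) 1, γ t ∈ Metric.ball (0:ℂ) ρ₂ := by
    intro t ht
    have := (convex_ball (0:ℂ) ρ₂).add_smul_sub_mem hz₁ hz₂ ht
    simpa [hγ, Complex.real_smul] using this
  have hγ1 : ∀ t ∈ Icc (0:ℝ) 1, γ t ∈ Metric.ball (0:ℂ) 1 := fun t ht => hsub (hγmem t ht)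
  have cγ : Continuous γ := by continuity
  have hHa : AnalyticOnNhd ℂ (deriv h) (Metric.ball 0 1) :=
    (hh.analyticOnNhd Metric.isOpen_ball).deriv
  have hGa : AnalyticOnNhd ℂ (deriv g) (Metric.ball 0 1) :=
    (hg.analyticOnNhd Metric.isOpen_ball).deriv
  -- derivative of γ
  have hγd : ∀ t : ℝ, HasDerivAt γ (z₂ - z₁) t := by
    intro t
    have hid : HasDerivAt (fun t : ℝ => (t:ℂ)) 1 t := by
      simpa using (hasDerivAt_id t).ofReal_comp
    simpa only [one_mul] using (hid.mul_const (z₂ - z₁)).const_add z₁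
  -- FTC for an analytic function along γ
  have FTC : ∀ F : ℂ → ℂ, DifferentiableOn ℂ F (Metric.ball 0 1) →
      F z₂ - F z₁ = (z₂ - z₁) * ∫ t in (0:ℝ)..1, deriv F (γ t) := by
    intro F hF
    have hderiv : ∀ t ∈ uIcc (0:ℝ) 1, HasDerivAt (fun t => F (γ t))
        ((z₂ - z₁) * deriv F (γ t)) t := by
      intro t ht
      rw [uIcc_of_le zero_le_one] at ht
      have hFd : HasDerivAt F (deriv F (γ t)) (γ t) :=
        (hF.differentiableAt (Metric.isOpen_ball.mem_nhds (hγ1 t ht))).hasDerivAt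
      have := HasDerivAt.scomp_of_eq t hFd (hγd t) rfl
      simpa [Function.comp_def, smul_eq_mul] using this
    have hint : IntervalIntegrable (fun t => (z₂ - z₁) * deriv F (γ t))
        MeasureTheory.volume 0 1 := by
      apply ContinuousOn.intervalIntegrable
      rw [uIcc_of_le zero_le_one]
      exact continuousOn_const.mul
        (((hF.analyticOnNhd Metric.isOpen_ball).deriv.continuousOn).comp cγ.continuousOn hγ1)
    have := intervalIntegral.integral_eq_sub_of_hasDerivAt hderiv hint
    rw [intervalIntegral.integral_const_mul] at this
    have e1 : γ 1 = z₂ := by simp [hγ]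
    have e0 : γ 0 = z₁ := by simp [hγ]
    rw [e1, e0] at this
    exact this.symm
  have hH := FTC h hh
  have hG := FTC g hg
  set Ih := ∫ t in (0:ℝ)..1, deriv h (γ t) with hIh
  set Ig := ∫ t in (0:ℝ)..1, deriv g (γ t) with hIg
  -- from f z₁ = f z₂
  have habs : ‖(z₂ - z₁) * Ih‖ = ‖(z₂ - z₁) * Ig‖ := by
    have : h z₂ - h z₁ = -(starRingEnd ℂ (g z₂ - g z₁)) := by
      have := hfeq
      simp only [map_sub] at *
      linear_combination hfeq.symm
    rw [hH, hG] at this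
    rw [this, norm_neg, Complex.norm_conj]
  have habs' : ‖Ih‖ = ‖Ig‖ := by
    rw [norm_mul, norm_mul] at habs
    exact mul_left_cancel₀ (norm_ne_zero_iff.2 hd) habs
  -- integrability and continuity along γ
  have hHc : ContinuousOn (fun t : ℝ => deriv h (γ t)) (Icc 0 1) :=
    hHa.continuousOn.comp cγ.continuousOn hγ1
  have hGc : ContinuousOn (fun t : ℝ => deriv g (γ t)) (Icc 0 1) :=
    hGa.continuousOn.comp cγ.continuousOn hγ1
  have hHint : IntervalIntegrable (fun t : ℝ => deriv h (γ t)) MeasureTheory.volume 0 1 := by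
    apply ContinuousOn.intervalIntegrable
    rwa [uIcc_of_le zero_le_one]
  have hre : Ih.re = ∫ t in (0:ℝ)..1, (deriv h (γ t)).re := by
    rw [hIh]
    exact (Complex.reCLM.intervalIntegral_comp_comm hHint).symm
  have gle : ‖Ig‖ ≤ ∫ t in (0:ℝ)..1, ‖deriv g (γ t)‖ := by
    rw [hIg]
    exact intervalIntegral.norm_integral_le_integral_norm zero_le_one
  have hre_int : IntervalIntegrable (fun t : ℝ => (deriv h (γ t)).re)
      MeasureTheory.volume 0 1 := by
    apply ContinuousOn.intervalIntegrable
    rw [uIcc_of_le zero_le_one]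
    exact Complex.continuous_re.comp_continuousOn hHc
  have hgn_int : IntervalIntegrable (fun t : ℝ => ‖deriv g (γ t)‖)
      MeasureTheory.volume 0 1 := by
    apply ContinuousOn.intervalIntegrable
    rw [uIcc_of_le zero_le_one]
    exact hGc.norm
  have hpos : 0 < ∫ t in (0:ℝ)..1, ((deriv h (γ t)).re - ‖deriv g (γ t)‖) := by
    apply intervalIntegral_pos_of_pos_on (hre_int.sub hgn_int) _ zero_lt_one
    intro t ht
    have := hkey (γ t) (hγ1 t (Ioo_subset_Icc_self ht))
    linarith
  rw [intervalIntegral.integral_sub hre_int hgn_int] at hpos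
  have : ‖Ig‖ < ‖Ih‖ := by
    calc ‖Ig‖ ≤ ∫ t in (0:ℝ)..1, ‖deriv g (γ t)‖ := gle
      _ < ∫ t in (0:ℝ)..1, (deriv h (γ t)).re := by linarith
      _ = Ih.re := hre.symm
      _ ≤ ‖Ih‖ := Complex.re_le_norm Ih
  rw [habs'] at this
  exact lt_irrefl _ this
end

section
/- Let α ∈ (0, 1) and ρ ∈ [0, 1). Then ∑_{n=2}^∞ 2·ρⁿ/(α·n² + (1 − α)·n) = (2/(1 − α)) · ( α/(1 − α) + ρ·(α − 1) − ln(1 − ρ) − Φ(ρ, 1, (1 − α)/α) ), where Φ(z, 1, a) = ∑_{k=0}^∞ z^k/(k + a) is the Lerch transcendent with s = 1. -/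
/-!
Since `α n² + (1 - α) n = α n (n + a)` with `a = (1 - α) / α`, partial fractions turn the
`n`-th term into `2 / (1 - α) * (ρⁿ / n - ρⁿ / (n + a))`. Summed over `n ≥ 2`, the first part is
the tail of `-log (1 - ρ) = ∑ ρⁿ / n` and the second the tail of `Φ(ρ, 1, a)`, whose two dropped
terms are `1 / a = α / (1 - α)` and `ρ / (1 + a) = α ρ`.
-/

theorem hasSum_pow_add_two_div_add_two {x : ℝ} (hx : |x| < 1) :
    HasSum (fun n : ℕ => x ^ (n + 2) / (n + 2)) (-Real.log (1 - x) - x) := by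
  have h := (hasSum_nat_add_iff' 1).2 (Real.hasSum_pow_div_log_of_abs_lt_one hx)
  simpa [add_assoc, one_add_one_eq_two] using h

theorem summable_pow_div_natCast_add {x a : ℝ} (hx : |x| < 1) (ha : 0 < a) :
    Summable (fun k : ℕ => x ^ k / (k + a)) := by
  refine .of_norm_bounded
    ((summable_geometric_of_lt_one (abs_nonneg x) hx).div_const a) fun k => ?_
  rw [norm_div, norm_pow, Real.norm_eq_abs, Real.norm_of_nonneg (by positivity)]
  gcongr
  exact le_add_of_nonneg_left k.cast_nonneg

theorem hasSum_pow_add_two_div_add_two_add {x a : ℝ} (hx : |x| < 1) (ha : 0 < a) :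
    HasSum (fun n : ℕ => x ^ (n + 2) / (n + 2 + a))
      (∑' k : ℕ, x ^ k / (k + a) - (1 / a + x / (1 + a))) := by
  have h := (hasSum_nat_add_iff' 2).2 (summable_pow_div_natCast_add hx ha).hasSum
  simpa [Finset.sum_range_succ] using h

theorem one_div_mul_sq_add_mul_eq_sub {α x : ℝ} (hα : α ≠ 0) (hα' : 1 - α ≠ 0) (hx : x ≠ 0)
    (hxα : x + (1 - α) / α ≠ 0) :
    1 / (α * x ^ 2 + (1 - α) * x) = 1 / (1 - α) * (1 / x - 1 / (x + (1 - α) / α)) := by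
  have hxα' : α * x + (1 - α) ≠ 0 := by
    contrapose! hxα; field_simp; linarith
  field_simp
  ring

/-- Evaluation of the series `∑_{n≥2} 2ρⁿ/(αn² + (1-α)n)` in terms of the
Lerch transcendent `Φ(ρ, 1, a) = ∑_{k≥0} ρᵏ/(k + a)` with `a = (1-α)/α`:
for `α ∈ (0,1)` and `ρ ∈ [0,1)`,
`∑_{n≥2} 2ρⁿ/(αn² + (1-α)n)
  = (2/(1-α)) (α/(1-α) + ρ(α-1) - ln(1-ρ) - Φ(ρ, 1, (1-α)/α))`. -/
theorem lerch_series_evaluation (α ρ : ℝ) (hα : α ∈ Set.Ioo (0:ℝ) 1)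
    (hρ : ρ ∈ Set.Ico (0:ℝ) 1) :
    ∑' n : ℕ, 2 * ρ ^ (n + 2) / (α * (n + 2) ^ 2 + (1 - α) * (n + 2)) =
      2 / (1 - α) *
        (α / (1 - α) + ρ * (α - 1) - Real.log (1 - ρ)
          - ∑' k : ℕ, ρ ^ k / (k + (1 - α) / α)) := by
  obtain ⟨hα0, hα1⟩ := hα
  have hα1' : 1 - α ≠ 0 := by linarith
  have hρ' : |ρ| < 1 := abs_lt.2 ⟨by linarith [hρ.1], hρ.2⟩
  have ha : 0 < (1 - α) / α := div_pos (by linarith) hα0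
  have hterm (n : ℕ) : 2 * ρ ^ (n + 2) / (α * (n + 2) ^ 2 + (1 - α) * (n + 2)) =
      2 / (1 - α) * (ρ ^ (n + 2) / (n + 2) - ρ ^ (n + 2) / (n + 2 + (1 - α) / α)) := by
    rw [mul_div_assoc, ← mul_one_div (ρ ^ _),
      one_div_mul_sq_add_mul_eq_sub hα0.ne' hα1' (by positivity) (by positivity)]
    ring
  rw [funext hterm, (((hasSum_pow_add_two_div_add_two hρ').sub
    (hasSum_pow_add_two_div_add_two_add hρ' ha)).mul_left _).tsum_eq]
  field_simp
  ring
end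

section
/- Let M > 0 and let f = h + conj(g) be a harmonic mapping in the class W⁰_H(0) (i.e. Re h'(z) > |g'(z)| for all z ∈ D, with the stated normalization) such that |f(z)| < M for all z ∈ D. Then f is univalent (injective) on the disc D_{ρ₂} with ρ₂ = π/(8M + π), and the image f(D_{ρ₂}) contains the disc {w ∈ ℂ : |w| < R₂} with R₂ = π/(4M) + 2·ln( 8M/(π + 8M) ). -/
/-!
For every unimodular `c`, the analytic function `h' + c g'` has positive real part and equals `1`
at the origin, so the Carathéodory bound `|p z - 1| ≤ 2|z| / (1 - |z|)` (Schwarz's lemma applied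
to `(p - 1) / (p + 1)`) yields `Re h'(z) - |g'(z)| ≥ 1 - 2|z| / (1 - |z|)`. Along a segment from
`w` to `z`, the derivative of `t ↦ Re (f(w + t(z - w)) · conj (z - w))` is at least
`(Re h' - |g'|) |z - w|²`: this makes `f` injective on the whole disc and, integrated from `0`,
gives `|f z| ≥ 3|z| + 2 ln (1 - |z|)`. Since `|g'| < |h'|`, `f` is a local diffeomorphism, hence
open, so `f(D_ρ)` contains the disc whose radius is the minimum of `|f|` on `|z| = ρ`.
Finally `exp (iπ(h + g) / (2M))` has positive real part, and the Carathéodory bound `|p'(0)| ≤ 2`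
forces `M ≥ π/4`, which is exactly what makes `R₂ ≤ 3ρ₂ + 2 ln (1 - ρ₂)`.
-/

open Metric Set Real ComplexConjugate

namespace Complex

theorem norm_sub_one_lt_norm_add_one {w : ℂ} (hw : 0 < w.re) : ‖w - 1‖ < ‖w + 1‖ := by
  have key : normSq (w + 1) - normSq (w - 1) = 4 * w.re := by
    simp only [normSq_apply, add_re, add_im, sub_re, sub_im, one_re, one_im]
    ring
  rw [← sq_lt_sq₀ (norm_nonneg _) (norm_nonneg _), Complex.sq_norm, Complex.sq_norm]
  linarith

theorem norm_sub_one_div_add_one_lt_one {w : ℂ} (hw : 0 < w.re) : ‖(w - 1) / (w + 1)‖ < 1 := by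
  have hlt := norm_sub_one_lt_norm_add_one hw
  rwa [norm_div, div_lt_one ((norm_nonneg _).trans_lt hlt)]

theorem add_one_ne_zero_of_re_pos {w : ℂ} (hw : 0 < w.re) : w + 1 ≠ 0 :=
  ne_of_apply_ne re (by rw [add_re, one_re, zero_re]; linarith)

theorem exists_norm_eq_one_mul_eq_neg_norm (b : ℂ) : ∃ c : ℂ, ‖c‖ = 1 ∧ c * b = -‖b‖ := by
  refine ⟨-exp (↑(-b.arg) * I), by rw [norm_neg, norm_exp_ofReal_mul_I], ?_⟩
  calc -exp (↑(-b.arg) * I) * b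
      = -exp (↑(-b.arg) * I) * (‖b‖ * exp (b.arg * I)) := by
        rw [norm_mul_exp_arg_mul_I]
    _ = -‖b‖ * exp (↑(-b.arg) * I + b.arg * I) := by
        rw [exp_add]; ring
    _ = -‖b‖ := by push_cast; simp

theorem re_sub_norm_mul_sq_le (a b δ : ℂ) :
    (a.re - ‖b‖) * ‖δ‖ ^ 2 ≤ ((a * δ + conj (b * δ)) * conj δ).re := by
  have hexp : (a * δ + conj (b * δ)) * conj δ = a * ((‖δ‖ ^ 2 : ℝ) : ℂ) + conj (b * δ * δ) := by
    rw [ofReal_pow, ← mul_conj']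
    simp only [map_mul]
    ring
  have hb := (abs_le.1 (abs_re_le_norm (b * δ * δ))).1
  rw [norm_mul, norm_mul, mul_assoc, ← sq] at hb
  rw [hexp, add_re, re_mul_ofReal, conj_re]
  nlinarith

theorem eq_zero_of_mul_add_conj_mul_eq_zero {a b v : ℂ} (hab : ‖b‖ < ‖a‖)
    (hv : v * a + conj (v * b) = 0) : v = 0 := by
  have hnorm : ‖v‖ * ‖a‖ = ‖v‖ * ‖b‖ := by
    rw [← norm_mul, ← norm_mul, eq_neg_of_add_eq_zero_left hv, norm_neg, norm_conj]
  by_contra hv0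
  exact hab.ne' (mul_left_cancel₀ (norm_ne_zero_iff.2 hv0) hnorm)

end Complex

section Caratheodory

variable {p : ℂ → ℂ}

theorem differentiableOn_cayley (hp : DifferentiableOn ℂ p (ball 0 1))
    (hre : ∀ z ∈ ball (0 : ℂ) 1, 0 < (p z).re) :
    DifferentiableOn ℂ (fun z => (p z - 1) / (p z + 1)) (ball 0 1) :=
  (hp.sub_const 1).div (hp.add_const 1) fun z hz => Complex.add_one_ne_zero_of_re_pos (hre z hz)

theorem mapsTo_cayley (hre : ∀ z ∈ ball (0 : ℂ) 1, 0 < (p z).re) :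
    MapsTo (fun z => (p z - 1) / (p z + 1)) (ball 0 1) (closedBall 0 1) := fun z hz => by
  simpa using (Complex.norm_sub_one_div_add_one_lt_one (hre z hz)).le

theorem norm_sub_one_le_of_re_pos (hp : DifferentiableOn ℂ p (ball 0 1))
    (hre : ∀ z ∈ ball (0 : ℂ) 1, 0 < (p z).re) (hp0 : p 0 = 1) {z : ℂ}
    (hz : z ∈ ball (0 : ℂ) 1) :
    ‖p z - 1‖ ≤ 2 * ‖z‖ / (1 - ‖z‖) := by
  have hz1 : ‖z‖ < 1 := mem_ball_zero_iff.1 hz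
  have hschwarz : ‖(p z - 1) / (p z + 1)‖ ≤ ‖z‖ :=
    Complex.norm_le_norm_of_mapsTo_ball (differentiableOn_cayley hp hre) (mapsTo_cayley hre)
      (by simp [hp0]) hz1
  rw [norm_div, div_le_iff₀ ((norm_nonneg _).trans_lt
    (Complex.norm_sub_one_lt_norm_add_one (hre z hz)))] at hschwarz
  have htri : ‖p z + 1‖ ≤ ‖p z - 1‖ + 2 := by
    calc ‖p z + 1‖ = ‖(p z - 1) + 2‖ := by ring_nf
      _ ≤ ‖p z - 1‖ + 2 := by simpa using norm_add_le (p z - 1) 2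
  rw [le_div_iff₀ (by linarith)]
  nlinarith [norm_nonneg z]

theorem norm_deriv_zero_le_two_of_re_pos (hp : DifferentiableOn ℂ p (ball 0 1))
    (hre : ∀ z ∈ ball (0 : ℂ) 1, 0 < (p z).re) (hp0 : p 0 = 1) : ‖deriv p 0‖ ≤ 2 := by
  have hp' : HasDerivAt p (deriv p 0) 0 :=
    (hp.differentiableAt (isOpen_ball.mem_nhds (mem_ball_self one_pos))).hasDerivAt
  have hω : HasDerivAt (fun z => (p z - 1) / (p z + 1)) (deriv p 0 / 2) 0 := by
    refine ((hp'.sub_const 1).div (hp'.add_const 1) (by norm_num [hp0])).congr_deriv ?_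
    rw [hp0]
    ring
  have hschwarz := Complex.norm_deriv_le_one_of_mapsTo_ball (differentiableOn_cayley hp hre)
    (by simpa [hp0] using mapsTo_cayley hre) one_pos
  rw [hω.deriv, norm_div, Complex.norm_two] at hschwarz
  linarith

theorem norm_deriv_zero_le_of_abs_re_lt {φ : ℂ → ℂ} {M : ℝ}
    (hφ : DifferentiableOn ℂ φ (ball 0 1)) (hφ0 : φ 0 = 0)
    (hre : ∀ z ∈ ball (0 : ℂ) 1, |(φ z).re| < M) :
    ‖deriv φ 0‖ ≤ 4 * M / π := by
  have hM : 0 < M := by simpa [hφ0] using hre 0 (mem_ball_self one_pos)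
  set r : ℝ := π / (2 * M) with hr
  have hr0 : 0 < r := by positivity
  -- `exp (i r φ)` has real part `exp (-r Im φ) cos (r Re φ)`, and `|r Re φ| < π / 2`.
  set E : ℂ → ℂ := fun z => Complex.exp (r * Complex.I * φ z)
  have hEre : ∀ z ∈ ball (0 : ℂ) 1, 0 < (E z).re := by
    intro z hz
    have him : ((r : ℂ) * Complex.I * φ z).im = r * (φ z).re := by
      simp [Complex.mul_im, Complex.mul_re]
    rw [Complex.exp_re, him]
    refine mul_pos (Real.exp_pos _) (Real.cos_pos_of_mem_Ioo ?_)
    have hbound : |r * (φ z).re| < π / 2 := by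
      rw [abs_mul, abs_of_pos hr0]
      calc r * |(φ z).re| < r * M := mul_lt_mul_of_pos_left (hre z hz) hr0
        _ = π / 2 := by rw [hr]; field_simp
    exact ⟨by linarith [neg_abs_le (r * (φ z).re)], (le_abs_self _).trans_lt hbound⟩
  have hφ' : HasDerivAt φ (deriv φ 0) 0 :=
    (hφ.differentiableAt (isOpen_ball.mem_nhds (mem_ball_self one_pos))).hasDerivAt
  have hE' : HasDerivAt E (r * Complex.I * deriv φ 0) 0 := by
    simpa [hφ0] using (hφ'.const_mul (r * Complex.I)).cexp
  have hcara := norm_deriv_zero_le_two_of_re_pos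
    ((hφ.const_mul _).cexp) hEre (by simp [hφ0])
  rw [hE'.deriv, norm_mul, norm_mul, Complex.norm_I, Complex.norm_real, Real.norm_eq_abs,
    abs_of_pos hr0, mul_one] at hcara
  calc ‖deriv φ 0‖ = 2 * M / π * (r * ‖deriv φ 0‖) := by rw [hr]; field_simp
    _ ≤ 2 * M / π * 2 := by gcongr
    _ = 4 * M / π := by ring

end Caratheodory

section Harmonic

variable {h g : ℂ → ℂ}

theorem hasDerivAt_re_mul_conj_comp_segment {w δ : ℂ} {t : ℝ}
    (hh : DifferentiableAt ℂ h (w + t • δ)) (hg : DifferentiableAt ℂ g (w + t • δ)) :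
    HasDerivAt (fun s : ℝ => ((h (w + s • δ) + conj (g (w + s • δ))) * conj δ).re)
      (((deriv h (w + t • δ) * δ + conj (deriv g (w + t • δ) * δ)) * conj δ).re) t := by
  have hγ : HasDerivAt (fun s : ℝ => w + s • δ) δ t := by
    simpa using ((hasDerivAt_id t).smul_const δ).const_add w
  have hhγ := hh.hasDerivAt.scomp t hγ
  have hgγ := (hg.hasDerivAt.scomp t hγ).star
  rw [smul_eq_mul, mul_comm] at hhγ
  rw [smul_eq_mul, mul_comm, Complex.star_def] at hgγ
  exact Complex.reCLM.hasFDerivAt.comp_hasDerivAt t ((hhγ.add hgγ).mul_const (conj δ))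

variable {U : Set ℂ}

theorem injOn_of_norm_deriv_lt_re_deriv (hU : IsOpen U) (hUc : Convex ℝ U)
    (hh : DifferentiableOn ℂ h U) (hg : DifferentiableOn ℂ g U)
    (hlt : ∀ z ∈ U, ‖deriv g z‖ < (deriv h z).re) :
    InjOn (fun z => h z + conj (g z)) U := by
  intro z hz w hw hfzw
  by_contra hne
  have hδ : 0 < ‖z - w‖ := norm_pos_iff.2 (sub_ne_zero.2 hne)
  have hseg : ∀ t ∈ Icc (0 : ℝ) 1, w + t • (z - w) ∈ U := fun t ht => hUc.add_smul_sub_mem hw hz ht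
  have hderiv := fun t (ht : t ∈ Icc (0 : ℝ) 1) =>
    hasDerivAt_re_mul_conj_comp_segment (δ := z - w)
      (hh.differentiableAt (hU.mem_nhds (hseg t ht)))
      (hg.differentiableAt (hU.mem_nhds (hseg t ht)))
  have hmono := strictMonoOn_of_hasDerivWithinAt_pos (convex_Icc (0 : ℝ) 1)
    (fun t ht => (hderiv t ht).continuousAt.continuousWithinAt)
    (fun t ht => (hderiv t (interior_subset ht)).hasDerivWithinAt)
    (fun t ht => by
      have hpos := sub_pos.2 (hlt _ (hseg t (interior_subset ht)))
      exact (mul_pos hpos (pow_pos hδ 2)).trans_le (Complex.re_sub_norm_mul_sq_le _ _ _))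
    (left_mem_Icc.2 zero_le_one) (right_mem_Icc.2 zero_le_one) zero_lt_one
  simp only [zero_smul, add_zero, one_smul, add_sub_cancel] at hmono
  exact hmono.ne' (congrArg (fun x => (x * conj (z - w)).re) hfzw)

theorem sub_le_re_mul_conj_of_segment (hU : IsOpen U) (hUc : Convex ℝ U)
    (hh : DifferentiableOn ℂ h U) (hg : DifferentiableOn ℂ g U) {z w : ℂ} (hz : z ∈ U)
    (hw : w ∈ U) {Ψ ψ : ℝ → ℝ} (hΨ : ∀ t ∈ Icc (0 : ℝ) 1, HasDerivAt Ψ (ψ t) t)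
    (hψ : ∀ t ∈ Icc (0 : ℝ) 1,
      ψ t ≤ ((deriv h (w + t • (z - w))).re - ‖deriv g (w + t • (z - w))‖) * ‖z - w‖ ^ 2) :
    Ψ 1 - Ψ 0 ≤ ((h z + conj (g z) - (h w + conj (g w))) * conj (z - w)).re := by
  have hseg : ∀ t ∈ Icc (0 : ℝ) 1, w + t • (z - w) ∈ U := fun t ht => hUc.add_smul_sub_mem hw hz ht
  have hderiv := fun t (ht : t ∈ Icc (0 : ℝ) 1) =>
    (hasDerivAt_re_mul_conj_comp_segment (δ := z - w)
      (hh.differentiableAt (hU.mem_nhds (hseg t ht)))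
      (hg.differentiableAt (hU.mem_nhds (hseg t ht)))).sub (hΨ t ht)
  have hmono := monotoneOn_of_hasDerivWithinAt_nonneg (convex_Icc (0 : ℝ) 1)
    (fun t ht => (hderiv t ht).continuousAt.continuousWithinAt)
    (fun t ht => (hderiv t (interior_subset ht)).hasDerivWithinAt)
    (fun t ht => sub_nonneg.2 ((hψ t (interior_subset ht)).trans
      (Complex.re_sub_norm_mul_sq_le _ _ _)))
    (left_mem_Icc.2 zero_le_one) (right_mem_Icc.2 zero_le_one) zero_le_one
  simp only [Pi.sub_apply, zero_smul, add_zero, one_smul, add_sub_cancel] at hmono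
  rw [sub_mul, Complex.sub_re]
  linarith

theorem isOpen_image_of_norm_deriv_lt (hU : IsOpen U) (hh : DifferentiableOn ℂ h U)
    (hg : DifferentiableOn ℂ g U) (hlt : ∀ z ∈ U, ‖deriv g z‖ < ‖deriv h z‖) :
    IsOpen ((fun z => h z + conj (g z)) '' U) := by
  rw [isOpen_iff_mem_nhds]
  rintro _ ⟨z, hz, rfl⟩
  have hh' := (hh.analyticAt (hU.mem_nhds hz)).hasStrictDerivAt.hasStrictFDerivAt.restrictScalars ℝ
  have hg' := (hg.analyticAt (hU.mem_nhds hz)).hasStrictDerivAt.hasStrictFDerivAt.restrictScalars ℝ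
  have hf := hh'.add (Complex.conjCLE.toContinuousLinearMap.hasStrictFDerivAt.comp z hg')
  -- The real derivative `v ↦ v h'(z) + conj (v g'(z))` is injective, hence onto.
  refine (hf.map_nhds_eq_of_surj (LinearMap.range_eq_top.2 ?_)).ge
    (Filter.image_mem_map (hU.mem_nhds hz))
  refine LinearMap.injective_iff_surjective.1 ((injective_iff_map_eq_zero _).2 fun v hv => ?_)
  exact Complex.eq_zero_of_mul_add_conj_mul_eq_zero (hlt z hz) (by simpa using hv)

end Harmonic

theorem ball_subset_image_ball_of_le_dist_sphere {E F : Type*} [PseudoMetricSpace E]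
    [ProperSpace E] [NormedAddCommGroup F] [NormedSpace ℝ F] {f : E → F} {x₀ : E} {ρ R : ℝ}
    (hρ : 0 < ρ) (hf : ContinuousOn f (closedBall x₀ ρ)) (hopen : IsOpen (f '' ball x₀ ρ))
    (hsphere : ∀ z ∈ sphere x₀ ρ, R ≤ dist (f z) (f x₀)) :
    ball (f x₀) R ⊆ f '' ball x₀ ρ := by
  rcases le_or_gt R 0 with hR | hR
  · simp [ball_eq_empty.2 hR]
  have hclosed : IsClosed (f '' closedBall x₀ ρ) :=
    ((isCompact_closedBall x₀ ρ).image_of_continuousOn hf).isClosed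
  refine (convex_ball (f x₀) R).isPreconnected.subset_left_of_subset_union hopen
    hclosed.isOpen_compl (disjoint_compl_right.mono_left (image_mono ball_subset_closedBall))
    ?_ ⟨f x₀, mem_ball_self hR, x₀, mem_ball_self hρ, rfl⟩
  rintro w hw
  by_cases hwT : w ∈ f '' closedBall x₀ ρ
  · obtain ⟨z, hz, rfl⟩ := hwT
    by_cases hzb : z ∈ ball x₀ ρ
    · exact Or.inl ⟨z, hzb, rfl⟩
    · have hzs : z ∈ sphere x₀ ρ := mem_sphere.2 (le_antisymm hz (not_lt.1 hzb))
      exact absurd (mem_ball.1 hw) (not_lt.2 (hsphere z hzs))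
  · exact Or.inr hwT

section Class

variable {h g : ℂ → ℂ}

theorem one_sub_le_re_deriv_sub_norm_deriv (hh : DifferentiableOn ℂ h (ball 0 1))
    (hg : DifferentiableOn ℂ g (ball 0 1)) (hh1 : deriv h 0 = 1) (hg1 : deriv g 0 = 0)
    (hclass : ∀ z ∈ ball (0 : ℂ) 1, ‖deriv g z‖ < (deriv h z).re) {z : ℂ}
    (hz : z ∈ ball (0 : ℂ) 1) :
    1 - 2 * ‖z‖ / (1 - ‖z‖) ≤ (deriv h z).re - ‖deriv g z‖ := by
  -- Rotate `g'` so that `Re (h' + c g') > 0` everywhere and `Re (h' + c g') = Re h' - |g'|` at `z`.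
  obtain ⟨c, hc1, hcz⟩ := Complex.exists_norm_eq_one_mul_eq_neg_norm (deriv g z)
  have hre : ∀ w ∈ ball (0 : ℂ) 1, 0 < (deriv h w + c * deriv g w).re := by
    intro w hw
    have := (abs_le.1 (Complex.abs_re_le_norm (c * deriv g w))).1
    rw [norm_mul, hc1, one_mul] at this
    rw [Complex.add_re]
    linarith [hclass w hw]
  have hcara := norm_sub_one_le_of_re_pos (p := fun w => deriv h w + c * deriv g w)
    ((hh.deriv isOpen_ball).add ((hg.deriv isOpen_ball).const_mul c)) hre
    (by simp [hh1, hg1]) hz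
  have hre_le := (abs_le.1 (Complex.abs_re_le_norm (deriv h z + c * deriv g z - 1))).1
  rw [hcz] at hcara hre_le
  simp only [Complex.sub_re, Complex.add_re, Complex.neg_re, Complex.ofReal_re,
    Complex.one_re] at hre_le
  linarith

theorem three_mul_norm_add_two_mul_log_le_norm (hh : DifferentiableOn ℂ h (ball 0 1))
    (hg : DifferentiableOn ℂ g (ball 0 1)) (hh0 : h 0 = 0) (hh1 : deriv h 0 = 1)
    (hg0 : g 0 = 0) (hg1 : deriv g 0 = 0)
    (hclass : ∀ z ∈ ball (0 : ℂ) 1, ‖deriv g z‖ < (deriv h z).re) {z : ℂ}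
    (hz : z ∈ ball (0 : ℂ) 1) :
    3 * ‖z‖ + 2 * log (1 - ‖z‖) ≤ ‖h z + conj (g z)‖ := by
  rcases eq_or_ne z 0 with rfl | hz0
  · simp [hh0, hg0]
  set ρ := ‖z‖ with hρ
  have hρ0 : 0 < ρ := norm_pos_iff.2 hz0
  have hρ1 : ρ < 1 := mem_ball_zero_iff.1 hz
  have hpos : ∀ t ∈ Icc (0 : ℝ) 1, 0 < 1 - t * ρ := fun t ht => by nlinarith [ht.2]
  -- `Ψ` integrates the lower bound `(1 - 2|tz| / (1 - |tz|)) |z|²` for `(Re h' - |g'|)(tz) |z|²`.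
  have hΨ : ∀ t ∈ Icc (0 : ℝ) 1, HasDerivAt (fun t => 3 * ρ ^ 2 * t + 2 * ρ * log (1 - t * ρ))
      ((1 - 2 * (t * ρ) / (1 - t * ρ)) * ρ ^ 2) t := by
    intro t ht
    have hlog := (((hasDerivAt_id' t).mul_const ρ).const_sub 1).log (hpos t ht).ne'
    refine (((hasDerivAt_id' t).const_mul (3 * ρ ^ 2)).add (hlog.const_mul (2 * ρ))).congr_deriv ?_
    have hne : 1 - ρ * t ≠ 0 := by rw [mul_comm]; exact (hpos t ht).ne'
    field_simp
    ring
  have hψ : ∀ t ∈ Icc (0 : ℝ) 1, (1 - 2 * (t * ρ) / (1 - t * ρ)) * ρ ^ 2 ≤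
      ((deriv h (0 + t • (z - 0))).re - ‖deriv g (0 + t • (z - 0))‖) * ‖z - 0‖ ^ 2 := by
    intro t ht
    have htz : t • z ∈ ball (0 : ℂ) 1 := (convex_ball 0 1).smul_mem_of_zero_mem
      (mem_ball_self one_pos) hz ht
    have hnorm : ‖t • z‖ = t * ρ := by rw [norm_smul, Real.norm_of_nonneg ht.1]
    simpa only [zero_add, sub_zero, hnorm] using mul_le_mul_of_nonneg_right
      (one_sub_le_re_deriv_sub_norm_deriv hh hg hh1 hg1 hclass htz) (sq_nonneg ρ)
  have key := sub_le_re_mul_conj_of_segment isOpen_ball (convex_ball 0 1) hh hg hz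
    (mem_ball_self one_pos) hΨ hψ
  have hre : ((h z + conj (g z)) * conj z).re ≤ ‖h z + conj (g z)‖ * ρ := by
    simpa [hρ] using Complex.re_le_norm ((h z + conj (g z)) * conj z)
  simp only [hh0, hg0, map_zero, add_zero, sub_zero, mul_one, one_mul, mul_zero,
    zero_mul, log_one] at key
  nlinarith

theorem pi_div_four_le_of_norm_lt {M : ℝ} (hh : DifferentiableOn ℂ h (ball 0 1))
    (hg : DifferentiableOn ℂ g (ball 0 1)) (hh0 : h 0 = 0) (hh1 : deriv h 0 = 1)
    (hg0 : g 0 = 0) (hg1 : deriv g 0 = 0)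
    (hbound : ∀ z ∈ ball (0 : ℂ) 1, ‖h z + conj (g z)‖ < M) :
    π / 4 ≤ M := by
  -- `h + g` is analytic with the same real part as `h + conj g`.
  have hre : ∀ z ∈ ball (0 : ℂ) 1, |(h z + g z).re| < M := fun z hz => by
    simpa using (Complex.abs_re_le_norm (h z + conj (g z))).trans_lt (hbound z hz)
  have h0 : (0 : ℂ) ∈ ball (0 : ℂ) 1 := mem_ball_self one_pos
  have hderiv : deriv (h + g) 0 = 1 := by
    rw [deriv_add (hh.differentiableAt (isOpen_ball.mem_nhds h0))
      (hg.differentiableAt (isOpen_ball.mem_nhds h0)), hh1, hg1, add_zero]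
  have := norm_deriv_zero_le_of_abs_re_lt (hh.add hg) (by simp [hh0, hg0]) hre
  rw [hderiv, norm_one, le_div_iff₀ Real.pi_pos] at this
  linarith

theorem ball_three_mul_add_two_mul_log_subset_image (hh : DifferentiableOn ℂ h (ball 0 1))
    (hg : DifferentiableOn ℂ g (ball 0 1)) (hh0 : h 0 = 0) (hh1 : deriv h 0 = 1)
    (hg0 : g 0 = 0) (hg1 : deriv g 0 = 0)
    (hclass : ∀ z ∈ ball (0 : ℂ) 1, ‖deriv g z‖ < (deriv h z).re) {ρ : ℝ} (hρ0 : 0 < ρ)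
    (hρ1 : ρ < 1) :
    ball 0 (3 * ρ + 2 * log (1 - ρ)) ⊆ (fun z => h z + conj (g z)) '' ball 0 ρ := by
  have hsub : closedBall (0 : ℂ) ρ ⊆ ball 0 1 := closedBall_subset_ball hρ1
  have hsphere : ∀ z ∈ sphere (0 : ℂ) ρ,
      3 * ρ + 2 * log (1 - ρ) ≤ dist (h z + conj (g z)) (h 0 + conj (g 0)) := by
    intro z hz
    rw [hh0, hg0, map_zero, add_zero, dist_zero_right, ← mem_sphere_zero_iff_norm.1 hz]
    exact three_mul_norm_add_two_mul_log_le_norm hh hg hh0 hh1 hg0 hg1 hclass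
      (hsub (sphere_subset_closedBall hz))
  have hcover := ball_subset_image_ball_of_le_dist_sphere (f := fun z => h z + conj (g z)) hρ0
    ((hh.continuousOn.add (Complex.continuous_conj.comp_continuousOn hg.continuousOn)).mono hsub)
    (isOpen_image_of_norm_deriv_lt isOpen_ball (hh.mono (ball_subset_ball hρ1.le))
      (hg.mono (ball_subset_ball hρ1.le))
      fun z hz => (hclass z (ball_subset_ball hρ1.le hz)).trans_le (Complex.re_le_norm _))
    hsphere
  rwa [hh0, hg0, map_zero, add_zero] at hcover

end Class

theorem landau_radius_le {M : ℝ} (hM : π / 4 ≤ M) :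
    π / (4 * M) + 2 * log (8 * M / (π + 8 * M)) ≤
      3 * (π / (8 * M + π)) + 2 * log (1 - π / (8 * M + π)) := by
  have hM0 : 0 < M := by linarith [Real.pi_pos]
  have hlog : 8 * M / (π + 8 * M) = 1 - π / (8 * M + π) := by
    field_simp
    ring
  have hlin : π / (4 * M) ≤ 3 * π / (8 * M + π) := by
    rw [div_le_div_iff₀ (by positivity) (by positivity)]
    nlinarith [Real.pi_pos]
  rw [hlog, ← mul_div_assoc]
  linarith

theorem landau_W0H0_general (M : ℝ) (h g : ℂ → ℂ)
    (hh : DifferentiableOn ℂ h (Metric.ball 0 1))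
    (hg : DifferentiableOn ℂ g (Metric.ball 0 1))
    (hh0 : h 0 = 0) (hh1 : deriv h 0 = 1)
    (hg0 : g 0 = 0) (hg1 : deriv g 0 = 0)
    (hclass : ∀ z ∈ Metric.ball (0:ℂ) 1, (deriv h z).re > ‖deriv g z‖)
    (hbound : ∀ z ∈ Metric.ball (0:ℂ) 1,
      ‖h z + starRingEnd ℂ (g z)‖ < M) :
    Set.InjOn (fun z => h z + starRingEnd ℂ (g z))
        (Metric.ball 0 (Real.pi / (8 * M + Real.pi))) ∧
      Metric.ball (0:ℂ)
          (Real.pi / (4 * M) + 2 * Real.log (8 * M / (Real.pi + 8 * M))) ⊆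
        (fun z => h z + starRingEnd ℂ (g z)) ''
          (Metric.ball 0 (Real.pi / (8 * M + Real.pi))) := by
  have hM := pi_div_four_le_of_norm_lt hh hg hh0 hh1 hg0 hg1 hbound
  have hρ0 : 0 < Real.pi / (8 * M + Real.pi) := div_pos Real.pi_pos (by linarith [Real.pi_pos])
  have hρ1 : Real.pi / (8 * M + Real.pi) < 1 := by
    rw [div_lt_one (by linarith [Real.pi_pos])]
    linarith [Real.pi_pos]
  exact ⟨(injOn_of_norm_deriv_lt_re_deriv isOpen_ball (convex_ball 0 1) hh hg hclass).mono
      (ball_subset_ball hρ1.le),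
    (ball_subset_ball (landau_radius_le hM)).trans
      (ball_three_mul_add_two_mul_log_subset_image hh hg hh0 hh1 hg0 hg1 hclass hρ0 hρ1)⟩

/-- Landau-type theorem for the class `W⁰_H(0)` (`Re h' > |g'|`): `f` is
injective on `D_{ρ₂}` with `ρ₂ = π/(8M + π)`, and the image `f(D_{ρ₂})`
contains the disc of radius `R₂ = π/(4M) + 2 ln(8M/(π + 8M))`. -/
theorem landau_W0H0 (M : ℝ) (hM : 0 < M) (h g : ℂ → ℂ)
    (hh : DifferentiableOn ℂ h (Metric.ball 0 1))
    (hg : DifferentiableOn ℂ g (Metric.ball 0 1))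
    (hh0 : h 0 = 0) (hh1 : deriv h 0 = 1)
    (hg0 : g 0 = 0) (hg1 : deriv g 0 = 0)
    (hclass : ∀ z ∈ Metric.ball (0:ℂ) 1, (deriv h z).re > ‖deriv g z‖)
    (hbound : ∀ z ∈ Metric.ball (0:ℂ) 1,
      ‖h z + starRingEnd ℂ (g z)‖ < M) :
    Set.InjOn (fun z => h z + starRingEnd ℂ (g z))
        (Metric.ball 0 (Real.pi / (8 * M + Real.pi))) ∧
      Metric.ball (0:ℂ)
          (Real.pi / (4 * M) + 2 * Real.log (8 * M / (Real.pi + 8 * M))) ⊆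
        (fun z => h z + starRingEnd ℂ (g z)) ''
          (Metric.ball 0 (Real.pi / (8 * M + Real.pi))) :=
  landau_W0H0_general M h g hh hg hh0 hh1 hg0 hg1 hclass hbound
end

section
/- Let M > 0 and α ≥ 0. Let f = h + conj(g) where h and g are analytic on the unit disc D with expansions h(z) = z + ∑_{n=2}^∞ aₙzⁿ and g(z) = ∑_{n=2}^∞ bₙzⁿ, suppose |f(z)| < M for all z ∈ D, and suppose the coefficients satisfy |aₙ| + |bₙ| ≤ 2/(1 + (n − 1)α) for all n ≥ 2. Let ρ₃ ∈ (0, 1) be a root of the equation π/(4M) − ∑_{n=2}^∞ 2n·r^{n−1}/(1 + (n − 1)α) = 0. Then f is univalent (injective) on the disc D_{ρ₃}. -/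
/-! If `f z = f w` with `‖z‖, ‖w‖ ≤ t < ρ₃`, the linear part `z - w` of `f z - f w` must be
cancelled by the tail, so `‖z - w‖ ≤ ∑_{n≥2} (‖aₙ‖ + ‖bₙ‖) ‖zⁿ - wⁿ‖ ≤ S(t) ‖z - w‖` with
`S(t) = ∑_{n≥2} 2n t^(n-1) / (1 + (n-1)α)`. Since `S` is strictly increasing,
`S(t) < S(ρ₃) = π/(4M)`, and this is `< 1` because `M ≥ 1`: on the circle `‖z‖ = r` the
antiholomorphic part only carries negative powers of `z`, so `∮ f(z) z⁻² dz = 2πi a₁` and the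
standard estimate gives `r ≤ M`. -/

open Complex ComplexConjugate Metric Real Topology

theorem hasSum_circleIntegral_of_norm_le {E : Type*} [NormedAddCommGroup E] [NormedSpace ℂ E]
    {F : ℕ → ℂ → E} {f : ℂ → E} {u : ℕ → ℝ} {c : ℂ} {R : ℝ} (hR : 0 ≤ R)
    (hF : ∀ n, ContinuousOn (F n) (sphere c R)) (hFu : ∀ n, ∀ z ∈ sphere c R, ‖F n z‖ ≤ u n)
    (hu : Summable u) (hFf : ∀ z ∈ sphere c R, HasSum (fun n ↦ F n z) (f z)) :
    HasSum (fun n ↦ ∮ z in C(c, R), F n z) (∮ z in C(c, R), f z) := by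
  refine intervalIntegral.hasSum_integral_of_dominated_convergence (fun n _ ↦ R * u n)
    (fun n ↦ ((circleIntegrable_iff R).1 ((hF n).circleIntegrable hR)).def'.aestronglyMeasurable)
    (fun n ↦ .of_forall fun θ _ ↦ ?_) (.of_forall fun _ _ ↦ hu.mul_left R)
    intervalIntegrable_const
    (.of_forall fun θ _ ↦ (hFf _ (circleMap_mem_sphere c hR θ)).const_smul _)
  rw [norm_smul, deriv_circleMap, norm_mul, norm_circleMap_zero, norm_I, mul_one, abs_of_nonneg hR]
  exact mul_le_mul_of_nonneg_left (hFu n _ (circleMap_mem_sphere c hR θ)) hR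

theorem circleIntegral_monomial_add_conj_mul_zpow (c d : ℂ) (n : ℕ) {k : ℕ} (hk : 1 ≤ k)
    {r : ℝ} (hr : 0 < r) :
    (∮ z in C(0, r), (c * z ^ n + conj (d * z ^ n)) * z ^ (-(k : ℤ) - 1)) =
      if n = k then 2 * π * I * c else 0 := by
  have hintegrable : ∀ (a : ℂ) (m : ℤ), CircleIntegrable (fun z ↦ a * (z - 0) ^ m) 0 r :=
    fun a m ↦
      ((circleIntegrable_sub_zpow_iff).2 (.inr (.inr (by simp [abs_of_pos hr, hr.ne])))).const_smul
  rw [circleIntegral.integral_congr hr.le (g := fun z ↦ c * (z - 0) ^ ((n : ℤ) - k - 1) +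
      conj d * r ^ (2 * n) * (z - 0) ^ (-(n : ℤ) - k - 1)) ?_,
    circleIntegral.integral_add (hintegrable _ _) (hintegrable _ _),
    circleIntegral.integral_const_mul, circleIntegral.integral_const_mul,
    circleIntegral.integral_sub_zpow_of_ne (n := -(n : ℤ) - k - 1) (by omega), mul_zero, add_zero]
  · split_ifs with hnk
    · simp only [hnk, sub_self, zero_sub, zpow_neg_one,
        circleIntegral.integral_sub_center_inv 0 hr.ne']
      ring
    · rw [circleIntegral.integral_sub_zpow_of_ne (by omega), mul_zero]
  intro z hz
  have hz0 : z ≠ 0 := ne_of_mem_sphere hz hr.ne'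
  -- so the antiholomorphic part only produces the powers `z ^ (-n - k - 1)`, never `z⁻¹`
  have hconj : conj z = r ^ 2 * z⁻¹ := by
    rw [eq_mul_inv_iff_mul_eq₀ hz0, mul_comm, mul_conj, normSq_eq_norm_sq,
      mem_sphere_zero_iff_norm.1 hz]
    push_cast; ring
  simp only [map_mul, map_pow, hconj, sub_zero, zpow_sub₀ hz0, zpow_neg, zpow_natCast, zpow_one,
    mul_pow, inv_pow]
  field_simp
  ring

theorem norm_pow_succ_sub_pow_succ_le {z w : ℂ} {t : ℝ} (hz : ‖z‖ ≤ t) (hw : ‖w‖ ≤ t) (n : ℕ) :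
    ‖z ^ (n + 1) - w ^ (n + 1)‖ ≤ (n + 1) * t ^ n * ‖z - w‖ := by
  refine (convex_closedBall (0 : ℂ) t).norm_image_sub_le_of_norm_deriv_le
    (fun x _ ↦ differentiableAt_pow _) (fun x hx ↦ ?_) (mem_closedBall_zero_iff.2 hw)
    (mem_closedBall_zero_iff.2 hz)
  rw [deriv_pow_field, norm_mul, norm_pow, add_tsub_cancel_right, Complex.norm_natCast,
    Nat.cast_succ]
  gcongr
  exact mem_closedBall_zero_iff.1 hx

section HarmonicSeries

variable {a b : ℕ → ℂ} {f : ℂ → ℂ}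

theorem norm_coeff_mul_pow_le_of_norm_le {r M : ℝ} {k : ℕ} (hk : 1 ≤ k) (hr : 0 < r)
    (hf : ∀ z ∈ sphere (0 : ℂ) r, HasSum (fun n ↦ a n * z ^ n + conj (b n * z ^ n)) (f z))
    (hab : Summable fun n ↦ (‖a n‖ + ‖b n‖) * r ^ n) (hfM : ∀ z ∈ sphere (0 : ℂ) r, ‖f z‖ ≤ M) :
    ‖a k‖ * r ^ k ≤ M := by
  have hterm : ∀ n, ∀ z ∈ sphere (0 : ℂ) r,
      ‖(a n * z ^ n + conj (b n * z ^ n)) * z ^ (-(k : ℤ) - 1)‖ ≤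
        (‖a n‖ + ‖b n‖) * r ^ n * r ^ (-(k : ℤ) - 1) := by
    intro n z hz
    rw [mem_sphere_zero_iff_norm] at hz
    rw [norm_mul, norm_zpow, hz]
    gcongr
    calc ‖a n * z ^ n + conj (b n * z ^ n)‖ ≤ ‖a n * z ^ n‖ + ‖conj (b n * z ^ n)‖ :=
          norm_add_le _ _
      _ = (‖a n‖ + ‖b n‖) * r ^ n := by
          simp only [norm_mul, norm_pow, hz, map_mul, map_pow, RCLike.norm_conj]
          ring
  have hsum := hasSum_circleIntegral_of_norm_le hr.le
    (F := fun n z ↦ (a n * z ^ n + conj (b n * z ^ n)) * z ^ (-(k : ℤ) - 1))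
    (fun n ↦ (Continuous.continuousOn (by fun_prop)).mul
      ((continuousOn_zpow₀ _).mono fun z hz ↦ ne_of_mem_sphere hz hr.ne'))
    hterm (hab.mul_right _) (fun z hz ↦ (hf z hz).mul_right (z ^ (-(k : ℤ) - 1)))
  have hI : (∮ z in C(0, r), f z * z ^ (-(k : ℤ) - 1)) = 2 * π * I * a k := by
    refine hsum.unique ((hasSum_ite_eq k (2 * π * I * a k)).congr_fun fun n ↦ ?_)
    rw [circleIntegral_monomial_add_conj_mul_zpow _ _ _ hk hr]
    split_ifs with h <;> simp [h]
  have hint := circleIntegral.norm_integral_le_of_norm_le_const hr.le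
    (f := fun z ↦ f z * z ^ (-(k : ℤ) - 1)) (C := M * r ^ (-(k : ℤ) - 1)) fun z hz ↦ by
      rw [norm_mul, norm_zpow, mem_sphere_zero_iff_norm.1 hz]
      exact mul_le_mul_of_nonneg_right (hfM z hz) (zpow_nonneg hr.le _)
  rw [hI, norm_mul, norm_mul, norm_mul, norm_I, mul_one, norm_real, Complex.norm_ofNat,
    Real.norm_of_nonneg pi_pos.le] at hint
  rw [← le_div_iff₀ (pow_pos hr k)]
  refine le_of_mul_le_mul_left (hint.trans_eq ?_) (by positivity : (0 : ℝ) < 2 * π)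
  rw [zpow_sub₀ hr.ne', zpow_neg, zpow_natCast, zpow_one]
  field_simp

theorem norm_coeff_le_of_norm_lt {M C : ℝ} {k : ℕ} (hk : 1 ≤ k)
    (hf : ∀ z ∈ ball (0 : ℂ) 1, HasSum (fun n ↦ a n * z ^ n + conj (b n * z ^ n)) (f z))
    (hab : ∀ n, ‖a n‖ + ‖b n‖ ≤ C) (hfM : ∀ z ∈ ball (0 : ℂ) 1, ‖f z‖ < M) :
    ‖a k‖ ≤ M := by
  refine le_of_tendsto (x := 𝓝[<] (1 : ℝ)) (f := fun r ↦ ‖a k‖ * r ^ k) ?_ ?_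
  · simpa using ((by fun_prop : Continuous fun r : ℝ ↦ ‖a k‖ * r ^ k).tendsto 1).mono_left
      nhdsWithin_le_nhds
  filter_upwards [Ioo_mem_nhdsLT zero_lt_one] with r ⟨hr0, hr1⟩
  have hsphere : sphere (0 : ℂ) r ⊆ ball 0 1 := sphere_subset_ball hr1
  refine norm_coeff_mul_pow_le_of_norm_le hk hr0 (fun z hz ↦ hf z (hsphere hz)) ?_
    fun z hz ↦ (hfM z (hsphere hz)).le
  exact ((summable_geometric_of_lt_one hr0.le hr1).mul_left C).of_nonneg_of_le
    (fun n ↦ by positivity) fun n ↦ mul_le_mul_of_nonneg_right (hab n) (by positivity)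

theorem norm_sub_sub_linear_le {z w : ℂ} {t : ℝ} (hz : ‖z‖ ≤ t) (hw : ‖w‖ ≤ t)
    (hfz : HasSum (fun n ↦ a n * z ^ n + conj (b n * z ^ n)) (f z))
    (hfw : HasSum (fun n ↦ a n * w ^ n + conj (b n * w ^ n)) (f w))
    (hS : Summable fun n : ℕ ↦ (n + 2) * (‖a (n + 2)‖ + ‖b (n + 2)‖) * t ^ (n + 1)) :
    ‖f z - f w - (a 1 * (z - w) + conj (b 1 * (z - w)))‖ ≤
      (∑' n : ℕ, (n + 2) * (‖a (n + 2)‖ + ‖b (n + 2)‖) * t ^ (n + 1)) * ‖z - w‖ := by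
  set D : ℕ → ℂ := fun n ↦ a n * (z ^ n - w ^ n) + conj (b n * (z ^ n - w ^ n))
  have hD : HasSum D (f z - f w) :=
    (hfz.sub hfw).congr_fun fun n ↦ by simp only [D, mul_sub, map_sub]; ring
  have htail :
      HasSum (fun n ↦ D (n + 2)) (f z - f w - (a 1 * (z - w) + conj (b 1 * (z - w)))) := by
    have h2 : ∑ i ∈ Finset.range 2, D i = a 1 * (z - w) + conj (b 1 * (z - w)) := by
      simp [D, Finset.sum_range_succ]
    rw [← h2]
    exact (hasSum_nat_add_iff' 2).2 hD
  rw [← tsum_mul_right]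
  refine htail.norm_le_of_bounded (hS.mul_right _).hasSum fun n ↦ ?_
  calc ‖D (n + 2)‖ ≤ (‖a (n + 2)‖ + ‖b (n + 2)‖) * ‖z ^ (n + 2) - w ^ (n + 2)‖ := by
        refine (norm_add_le _ _).trans_eq ?_
        rw [norm_conj, norm_mul, norm_mul, add_mul]
    _ ≤ (‖a (n + 2)‖ + ‖b (n + 2)‖) * ((((n + 1 : ℕ) : ℝ) + 1) * t ^ (n + 1) * ‖z - w‖) := by
        gcongr
        exact norm_pow_succ_sub_pow_succ_le hz hw (n + 1)
    _ = (n + 2) * (‖a (n + 2)‖ + ‖b (n + 2)‖) * t ^ (n + 1) * ‖z - w‖ := by push_cast; ring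

theorem injOn_ball_of_tsum_lt {ρ : ℝ}
    (hf : ∀ z ∈ ball (0 : ℂ) ρ, HasSum (fun n ↦ a n * z ^ n + conj (b n * z ^ n)) (f z))
    (hS : ∀ t, 0 ≤ t → t < ρ →
      Summable fun n : ℕ ↦ (n + 2) * (‖a (n + 2)‖ + ‖b (n + 2)‖) * t ^ (n + 1))
    (hlt : ∀ t, 0 ≤ t → t < ρ →
      ∑' n : ℕ, (n + 2) * (‖a (n + 2)‖ + ‖b (n + 2)‖) * t ^ (n + 1) < ‖a 1‖ - ‖b 1‖) :
    Set.InjOn f (ball 0 ρ) := by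
  intro z hz w hw hzw
  rw [mem_ball_zero_iff] at hz hw
  set t := max ‖z‖ ‖w‖
  have ht0 : 0 ≤ t := (norm_nonneg z).trans (le_max_left _ _)
  have htρ : t < ρ := max_lt hz hw
  have hupper := norm_sub_sub_linear_le (le_max_left _ _) (le_max_right _ _)
    (hf z (mem_ball_zero_iff.2 hz)) (hf w (mem_ball_zero_iff.2 hw)) (hS t ht0 htρ)
  rw [hzw, sub_self, zero_sub, norm_neg] at hupper
  have hlower : (‖a 1‖ - ‖b 1‖) * ‖z - w‖ ≤ ‖a 1 * (z - w) + conj (b 1 * (z - w))‖ := by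
    refine le_trans ?_ (norm_sub_le_norm_add _ _)
    rw [norm_conj, norm_mul, norm_mul, sub_mul]
  by_contra hne
  have hd : 0 < ‖z - w‖ := norm_pos_iff.2 (sub_ne_zero.2 hne)
  exact (mul_lt_mul_of_pos_right (hlt t ht0 htρ) hd).not_ge (hupper.trans' hlower)

end HarmonicSeries

section CoefficientBound

variable {α : ℝ}

theorem summable_landau_series (hα : 0 ≤ α) {t : ℝ} (ht0 : 0 ≤ t) (ht1 : t < 1) :
    Summable fun n : ℕ ↦ 2 * ((n : ℝ) + 2) * t ^ (n + 1) / (1 + ((n : ℝ) + 1) * α) := by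
  have ht : ‖t‖ < 1 := by rwa [norm_of_nonneg ht0]
  have hmaj : Summable fun n : ℕ ↦ 2 * ((n : ℝ) + 2) * t ^ (n + 1) :=
    (((summable_pow_mul_geometric_of_norm_lt_one 1 ht).mul_left (2 * t)).add
      ((summable_geometric_of_lt_one ht0 ht1).mul_left (4 * t))).congr fun n ↦ by ring
  exact hmaj.of_nonneg_of_le (fun n ↦ by positivity) fun n ↦
    div_le_self (by positivity) (le_add_of_nonneg_right (by positivity))

theorem tsum_landau_series_lt (hα : 0 ≤ α) {s t : ℝ} (hs0 : 0 ≤ s) (hst : s < t) (ht1 : t < 1) :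
    ∑' n : ℕ, 2 * ((n : ℝ) + 2) * s ^ (n + 1) / (1 + ((n : ℝ) + 1) * α) <
      ∑' n : ℕ, 2 * ((n : ℝ) + 2) * t ^ (n + 1) / (1 + ((n : ℝ) + 1) * α) := by
  refine Summable.tsum_lt_tsum (i := 0) (fun n ↦ ?_) (by gcongr)
    (summable_landau_series hα hs0 (hst.trans ht1))
    (summable_landau_series hα (hs0.trans hst.le) ht1)
  gcongr

variable {a b : ℕ → ℂ}

theorem norm_add_norm_le_two (hα : 0 ≤ α)
    (hcoef : ∀ n : ℕ, 2 ≤ n → ‖a n‖ + ‖b n‖ ≤ 2 / (1 + ((n : ℝ) - 1) * α))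
    (ha0 : a 0 = 0) (ha1 : a 1 = 1) (hb0 : b 0 = 0) (hb1 : b 1 = 0) :
    ∀ n, ‖a n‖ + ‖b n‖ ≤ 2
  | 0 => by simp [ha0, hb0]
  | 1 => by norm_num [ha1, hb1]
  | n + 2 => (hcoef (n + 2) (by omega)).trans <|
      div_le_self zero_le_two (le_add_of_nonneg_right (mul_nonneg (by push_cast; linarith) hα))

theorem coeff_majorant_le_landau_series
    (hcoef : ∀ n : ℕ, 2 ≤ n → ‖a n‖ + ‖b n‖ ≤ 2 / (1 + ((n : ℝ) - 1) * α))
    {t : ℝ} (ht : 0 ≤ t) (n : ℕ) :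
    (n + 2) * (‖a (n + 2)‖ + ‖b (n + 2)‖) * t ^ (n + 1) ≤
      2 * ((n : ℝ) + 2) * t ^ (n + 1) / (1 + ((n : ℝ) + 1) * α) := by
  have h := hcoef (n + 2) (by omega)
  rw [show ((n + 2 : ℕ) : ℝ) - 1 = n + 1 by push_cast; ring] at h
  calc (n + 2) * (‖a (n + 2)‖ + ‖b (n + 2)‖) * t ^ (n + 1)
      ≤ (n + 2) * (2 / (1 + ((n : ℝ) + 1) * α)) * t ^ (n + 1) := by gcongr
    _ = 2 * ((n : ℝ) + 2) * t ^ (n + 1) / (1 + ((n : ℝ) + 1) * α) := by ring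

end CoefficientBound

theorem landau_GkHa_univalence_general (M α : ℝ) (hα : 0 ≤ α)
    (h g : ℂ → ℂ) (a b : ℕ → ℂ)
    (hhsum : ∀ z ∈ Metric.ball (0:ℂ) 1, HasSum (fun n : ℕ => a n * z ^ n) (h z))
    (hgsum : ∀ z ∈ Metric.ball (0:ℂ) 1, HasSum (fun n : ℕ => b n * z ^ n) (g z))
    (ha0 : a 0 = 0) (ha1 : a 1 = 1) (hb0 : b 0 = 0) (hb1 : b 1 = 0)
    (hcoef : ∀ n : ℕ, 2 ≤ n →
      ‖a n‖ + ‖b n‖ ≤ 2 / (1 + ((n : ℝ) - 1) * α))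
    (hbound : ∀ z ∈ Metric.ball (0:ℂ) 1,
      ‖h z + starRingEnd ℂ (g z)‖ < M)
    (ρ₃ : ℝ) (hρ₃ : ρ₃ ∈ Set.Ioo (0:ℝ) 1)
    (hroot : Real.pi / (4 * M)
        - ∑' n : ℕ, 2 * ((n : ℝ) + 2) * ρ₃ ^ (n + 1) / (1 + ((n : ℝ) + 1) * α) = 0) :
    Set.InjOn (fun z => h z + starRingEnd ℂ (g z)) (Metric.ball 0 ρ₃) := by
  obtain ⟨hρ0, hρ1⟩ := hρ₃
  have hf : ∀ z ∈ ball (0 : ℂ) 1,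
      HasSum (fun n ↦ a n * z ^ n + conj (b n * z ^ n)) (h z + conj (g z)) :=
    fun z hz ↦ (hhsum z hz).add ((hgsum z hz).map (starRingEnd ℂ) continuous_star)
  have hM1 : 1 ≤ M := by
    simpa [ha1] using norm_coeff_le_of_norm_lt le_rfl hf
      (norm_add_norm_le_two hα hcoef ha0 ha1 hb0 hb1) hbound
  have hS : ∀ t, 0 ≤ t → t < ρ₃ →
      Summable fun n : ℕ ↦ (n + 2) * (‖a (n + 2)‖ + ‖b (n + 2)‖) * t ^ (n + 1) :=
    fun t ht0 htρ ↦ (summable_landau_series hα ht0 (htρ.trans hρ1)).of_nonneg_of_le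
      (fun n ↦ by positivity) (coeff_majorant_le_landau_series hcoef ht0)
  refine injOn_ball_of_tsum_lt (fun z hz ↦ hf z (ball_subset_ball hρ1.le hz)) hS
    fun t ht0 htρ ↦ ?_
  calc _ ≤ ∑' n : ℕ, 2 * ((n : ℝ) + 2) * t ^ (n + 1) / (1 + ((n : ℝ) + 1) * α) :=
        (hS t ht0 htρ).tsum_le_tsum (coeff_majorant_le_landau_series hcoef ht0)
          (summable_landau_series hα ht0 (htρ.trans hρ1))
    _ < ∑' n : ℕ, 2 * ((n : ℝ) + 2) * ρ₃ ^ (n + 1) / (1 + ((n : ℝ) + 1) * α) :=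
        tsum_landau_series_lt hα ht0 htρ hρ1
    _ = π / (4 * M) := by linarith
    _ ≤ π / 4 := div_le_div_of_nonneg_left pi_pos.le four_pos (by linarith)
    _ < 1 := by linarith [pi_lt_d2]
    _ = ‖a 1‖ - ‖b 1‖ := by simp [ha1, hb1]

/-- Landau-type theorem (univalence) under the sharp coefficient bounds of the
class `G_{k,H}(α,1)`: with `h(z) = z + ∑_{n≥2} aₙ zⁿ`, `g(z) = ∑_{n≥2} bₙ zⁿ`,
`|f| < M`, and `|aₙ| + |bₙ| ≤ 2/(1 + (n-1)α)` for `n ≥ 2`, if `ρ₃ ∈ (0,1)` is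
a root of `π/(4M) - ∑_{n≥2} 2n r^{n-1}/(1 + (n-1)α) = 0`, then
`f = h + conj g` is injective on `D_{ρ₃}`. -/
theorem landau_GkHa_univalence (M α : ℝ) (hM : 0 < M) (hα : 0 ≤ α)
    (h g : ℂ → ℂ) (a b : ℕ → ℂ)
    (hhsum : ∀ z ∈ Metric.ball (0:ℂ) 1, HasSum (fun n : ℕ => a n * z ^ n) (h z))
    (hgsum : ∀ z ∈ Metric.ball (0:ℂ) 1, HasSum (fun n : ℕ => b n * z ^ n) (g z))
    (ha0 : a 0 = 0) (ha1 : a 1 = 1) (hb0 : b 0 = 0) (hb1 : b 1 = 0)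
    (hcoef : ∀ n : ℕ, 2 ≤ n →
      ‖a n‖ + ‖b n‖ ≤ 2 / (1 + ((n : ℝ) - 1) * α))
    (hbound : ∀ z ∈ Metric.ball (0:ℂ) 1,
      ‖h z + starRingEnd ℂ (g z)‖ < M)
    (ρ₃ : ℝ) (hρ₃ : ρ₃ ∈ Set.Ioo (0:ℝ) 1)
    (hroot : Real.pi / (4 * M)
        - ∑' n : ℕ, 2 * ((n : ℝ) + 2) * ρ₃ ^ (n + 1) / (1 + ((n : ℝ) + 1) * α) = 0) :
    Set.InjOn (fun z => h z + starRingEnd ℂ (g z)) (Metric.ball 0 ρ₃) :=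
  landau_GkHa_univalence_general M α hα h g a b hhsum hgsum ha0 ha1 hb0 hb1 hcoef hbound ρ₃ hρ₃
    hroot
end

section
/- Let M > 0 and α ≥ 0. Let f = h + conj(g) where h and g are analytic on the unit disc D with expansions h(z) = z + ∑_{n=2}^∞ aₙzⁿ and g(z) = ∑_{n=2}^∞ bₙzⁿ, suppose |f(z)| < M for all z ∈ D, and suppose |aₙ| + |bₙ| ≤ 2/(1 + (n − 1)α) for all n ≥ 2. Let ρ₃ ∈ (0, 1) be a root of π/(4M) − ∑_{n=2}^∞ 2n·r^{n−1}/(1 + (n − 1)α) = 0 and set R₃ = (π/(4M))·ρ₃ − ∑_{n=2}^∞ 2·ρ₃ⁿ/(1 + (n − 1)α). Then the image f(D_{ρ₃}) contains the disc {w ∈ ℂ : |w| < R₃}. -/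
/-!
Integrating `f(r e^{iθ}) e^{-iθ}` over `θ ∈ [0, 2π]` picks out the coefficient `r a₁ = r`, so
`|f| < M` on the disc forces `M ≥ 1` and hence `c := π/(4M) < 1`. On the closed disc of radius `ρ₃`
the coefficient bounds make `F := f - id` bounded by `S := ∑_{n≥2} 2ρ₃ⁿ/(1 + (n-1)α)` and, by the
choice of `ρ₃`, `c`-Lipschitz. For `|w| < cρ₃ - S ≤ ρ₃ - S` the map `z ↦ w - F z` is therefore a
contraction of that closed disc into the open one, and its fixed point solves `f z = w`.
-/

open Complex MeasureTheory Metric Filter ComplexConjugate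
open scoped Real NNReal Topology

def harmonicMonomial (a b : ℂ) (m : ℕ) (z : ℂ) : ℂ := a * z ^ m + conj (b * z ^ m)

lemma norm_mul_add_conj_mul_le (a b t : ℂ) : ‖a * t + conj (b * t)‖ ≤ (‖a‖ + ‖b‖) * ‖t‖ :=
  calc _ ≤ ‖a * t‖ + ‖conj (b * t)‖ := norm_add_le _ _
    _ = _ := by rw [RCLike.norm_conj, norm_mul, norm_mul, add_mul]

lemma norm_harmonicMonomial_le (a b : ℂ) (m : ℕ) (z : ℂ) :
    ‖harmonicMonomial a b m z‖ ≤ (‖a‖ + ‖b‖) * ‖z‖ ^ m :=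
  (norm_mul_add_conj_mul_le a b _).trans_eq (by rw [norm_pow])

lemma norm_pow_sub_pow_le {𝕜 : Type*} [RCLike 𝕜] {z w : 𝕜} {ρ : ℝ} (hz : ‖z‖ ≤ ρ)
    (hw : ‖w‖ ≤ ρ) (n : ℕ) : ‖z ^ n - w ^ n‖ ≤ n * ρ ^ (n - 1) * ‖z - w‖ :=
  (convex_closedBall (0 : 𝕜) ρ).norm_image_sub_le_of_norm_hasDerivWithin_le
    (fun x _ ↦ (hasDerivAt_pow n x).hasDerivWithinAt)
    (fun x hx ↦ by
      rw [norm_mul, norm_pow, RCLike.norm_natCast]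
      gcongr
      exact mem_closedBall_zero_iff.mp hx)
    (mem_closedBall_zero_iff.mpr hw) (mem_closedBall_zero_iff.mpr hz)

lemma norm_harmonicMonomial_sub_le (a b : ℂ) {z w : ℂ} {ρ : ℝ} (hz : ‖z‖ ≤ ρ) (hw : ‖w‖ ≤ ρ)
    (m : ℕ) :
    ‖harmonicMonomial a b m z - harmonicMonomial a b m w‖ ≤
      (‖a‖ + ‖b‖) * (m * ρ ^ (m - 1)) * ‖z - w‖ := by
  have hsub : harmonicMonomial a b m z - harmonicMonomial a b m w =
      a * (z ^ m - w ^ m) + conj (b * (z ^ m - w ^ m)) := by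
    simp only [harmonicMonomial, mul_sub, map_sub]; abel
  rw [hsub, mul_assoc]
  exact (norm_mul_add_conj_mul_le _ _ _).trans <| by
    gcongr
    simpa only [mul_assoc] using norm_pow_sub_pow_le hz hw m

lemma integral_exp_int_mul_I (k : ℤ) :
    ∫ θ in (0:ℝ)..2 * π, exp (k * I * θ) = if k = 0 then (2 * π : ℂ) else 0 := by
  split_ifs with hk
  · simp [hk]
  · have hkI : (k : ℂ) * I ≠ 0 := mul_ne_zero (Int.cast_ne_zero.mpr hk) I_ne_zero
    have : (k : ℂ) * I * (2 * π : ℝ) = k * (2 * π * I) := by push_cast; ring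
    rw [integral_exp_mul_complex hkI, this, exp_int_mul_two_pi_mul_I]
    simp

lemma harmonicMonomial_circleMap_mul_exp_neg (a b : ℂ) (n : ℕ) (r θ : ℝ) :
    harmonicMonomial a b n (circleMap 0 r θ) * exp (-(θ * I)) =
      a * r ^ n * exp (((n : ℤ) - 1 : ℤ) * I * θ)
        + conj b * r ^ n * exp ((-(n : ℤ) - 1 : ℤ) * I * θ) := by
  simp only [harmonicMonomial, circleMap_zero, map_mul, map_pow, conj_ofReal, ← exp_conj,
    conj_I, mul_pow, ← Complex.exp_nat_mul, map_natCast]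
  push_cast
  simp only [add_mul, mul_assoc, ← Complex.exp_add]
  ring_nf

lemma integral_harmonicMonomial_circleMap_mul_exp_neg (a b : ℂ) (n : ℕ) (r : ℝ) :
    ∫ θ in (0:ℝ)..2 * π, harmonicMonomial a b n (circleMap 0 r θ) * exp (-(θ * I)) =
      if n = 1 then 2 * π * r * a else 0 := by
  simp_rw [harmonicMonomial_circleMap_mul_exp_neg]
  rw [intervalIntegral.integral_add (Continuous.intervalIntegrable (by fun_prop) _ _)
    (Continuous.intervalIntegrable (by fun_prop) _ _),
    intervalIntegral.integral_const_mul, intervalIntegral.integral_const_mul,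
    integral_exp_int_mul_I, integral_exp_int_mul_I]
  have hpos : (n : ℤ) - 1 = 0 ↔ n = 1 := by omega
  have hneg : (-(n : ℤ) - 1 = 0) = False := by simp only [eq_iff_iff, iff_false]; omega
  simp only [hpos, hneg, if_false, mul_zero, add_zero]
  split_ifs with hn
  · subst hn; ring
  · simp

lemma norm_coeff_one_mul_le {a b : ℕ → ℂ} {K M r : ℝ} {f : ℂ → ℂ}
    (hab : ∀ n, ‖a n‖ + ‖b n‖ ≤ K) (hr : 0 ≤ r) (hr1 : r < 1)
    (hf : ∀ z ∈ sphere (0 : ℂ) r, HasSum (fun n ↦ harmonicMonomial (a n) (b n) n z) (f z))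
    (hM : ∀ z ∈ sphere (0 : ℂ) r, ‖f z‖ ≤ M) :
    ‖a 1‖ * r ≤ M := by
  have hsum : HasSum
      (fun n ↦ ∫ θ in (0:ℝ)..2 * π,
        harmonicMonomial (a n) (b n) n (circleMap 0 r θ) * exp (-(θ * I)))
      (∫ θ in (0:ℝ)..2 * π, f (circleMap 0 r θ) * exp (-(θ * I))) := by
    refine intervalIntegral.hasSum_integral_of_dominated_convergence (fun n _ ↦ K * r ^ n)
      (fun n ↦ ?_) (fun n ↦ ae_of_all _ fun θ _ ↦ ?_)
      (ae_of_all _ fun θ _ ↦ (summable_geometric_of_lt_one hr hr1).mul_left K)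
      intervalIntegrable_const
      (ae_of_all _ fun θ _ ↦ (hf _ (circleMap_mem_sphere 0 hr θ)).mul_right _)
    · exact Continuous.aestronglyMeasurable (by unfold harmonicMonomial; fun_prop)
    · calc _ = ‖harmonicMonomial (a n) (b n) n (circleMap 0 r θ)‖ := by
            simp [Complex.norm_exp]
        _ ≤ (‖a n‖ + ‖b n‖) * r ^ n :=
            (norm_harmonicMonomial_le _ _ _ _).trans_eq
              (by rw [norm_circleMap_zero, abs_of_nonneg hr])
        _ ≤ K * r ^ n := by gcongr; exact hab n
  have hle : ‖∫ θ in (0:ℝ)..2 * π, f (circleMap 0 r θ) * exp (-(θ * I))‖ ≤ M * |2 * π - 0| :=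
    intervalIntegral.norm_integral_le_of_norm_le_const fun θ _ ↦ by
      simpa [Complex.norm_exp] using hM _ (circleMap_mem_sphere 0 hr θ)
  simp only [integral_harmonicMonomial_circleMap_mul_exp_neg] at hsum
  rw [hsum.unique (hasSum_single 1 fun n hn ↦ if_neg hn), if_pos rfl] at hle
  simp only [norm_mul, Complex.norm_ofNat, norm_real, Real.norm_eq_abs, abs_of_nonneg hr,
    abs_of_pos Real.pi_pos, sub_zero, abs_of_pos Real.two_pi_pos] at hle
  nlinarith [Real.pi_pos]

lemma norm_coeff_one_le {a b : ℕ → ℂ} {K M : ℝ} {f : ℂ → ℂ}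
    (hab : ∀ n, ‖a n‖ + ‖b n‖ ≤ K)
    (hf : ∀ z ∈ ball (0 : ℂ) 1, HasSum (fun n ↦ harmonicMonomial (a n) (b n) n z) (f z))
    (hM : ∀ z ∈ ball (0 : ℂ) 1, ‖f z‖ < M) :
    ‖a 1‖ ≤ M := by
  have hlim : Tendsto (fun r ↦ ‖a 1‖ * r) (𝓝[<] 1) (𝓝 (‖a 1‖ * 1)) :=
    ((continuous_const.mul continuous_id).tendsto 1).mono_left nhdsWithin_le_nhds
  refine mul_one ‖a 1‖ ▸ le_of_tendsto hlim ?_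
  filter_upwards [Ioo_mem_nhdsLT zero_lt_one] with r ⟨hr0, hr1⟩
  have hsub : sphere (0 : ℂ) r ⊆ ball 0 1 := sphere_subset_ball hr1
  exact norm_coeff_one_mul_le hab hr0.le hr1 (fun z hz ↦ hf z (hsub hz))
    fun z hz ↦ (hM z (hsub hz)).le

theorem ball_sub_subset_image_add_of_lipschitzOnWith {E : Type*} [NormedAddCommGroup E]
    [CompleteSpace E] {F : E → E} {K : ℝ≥0} {ρ S : ℝ} (hρ : 0 ≤ ρ) (hK : K < 1)
    (hF : LipschitzOnWith K F (closedBall 0 ρ)) (hS : ∀ z ∈ closedBall 0 ρ, ‖F z‖ ≤ S) :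
    ball 0 (ρ - S) ⊆ (fun z ↦ z + F z) '' ball 0 ρ := by
  intro w hw
  rw [mem_ball_zero_iff] at hw
  set T : E → E := fun z ↦ w - F z
  have hT : ∀ z ∈ closedBall 0 ρ, T z ∈ ball 0 ρ := fun z hz ↦ by
    rw [mem_ball_zero_iff]
    linarith [norm_sub_le w (F z), hS z hz]
  have hmaps : Set.MapsTo T (closedBall 0 ρ) (closedBall 0 ρ) :=
    fun z hz ↦ ball_subset_closedBall (hT z hz)
  have hcontr : ContractingWith K (hmaps.restrict T _ _) :=
    ⟨hK, LipschitzOnWith.mapsToRestrict hmaps <| LipschitzOnWith.of_dist_le_mul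
      fun x hx y hy ↦ by simpa only [T, dist_sub_left] using hF.dist_le_mul x hx y hy⟩
  obtain ⟨z, hz, hfix, -⟩ := hcontr.exists_fixedPoint' isClosed_closedBall.isComplete hmaps
    (mem_closedBall_self hρ) (edist_ne_top _ _)
  exact ⟨z, hfix ▸ hT z hz, eq_sub_iff_add_eq.mp hfix.symm⟩

section HarmonicTail

variable {a b : ℕ → ℂ} {F : ℂ → ℂ} {ρ : ℝ} {z w : ℂ}

lemma hasSum_harmonicMonomial_add_two {f : ℂ}
    (ha0 : a 0 = 0) (ha1 : a 1 = 1) (hb0 : b 0 = 0) (hb1 : b 1 = 0)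
    (hf : HasSum (fun n ↦ harmonicMonomial (a n) (b n) n z) f) :
    HasSum (fun n ↦ harmonicMonomial (a (n + 2)) (b (n + 2)) (n + 2) z) (f - z) := by
  simpa [Finset.sum_range_succ, harmonicMonomial, ha0, ha1, hb0, hb1] using
    (hasSum_nat_add_iff' 2).mpr hf

lemma norm_le_tsum_of_hasSum_harmonicMonomial {s : ℕ → ℝ} (hs : Summable s)
    (hbound : ∀ n, (‖a n‖ + ‖b n‖) * ρ ^ (n + 2) ≤ s n) (hz : ‖z‖ ≤ ρ)
    (hFz : HasSum (fun n ↦ harmonicMonomial (a n) (b n) (n + 2) z) (F z)) :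
    ‖F z‖ ≤ ∑' n, s n :=
  hFz.norm_le_of_bounded hs.hasSum fun n ↦ (norm_harmonicMonomial_le _ _ _ _).trans <|
    (by gcongr : (‖a n‖ + ‖b n‖) * ‖z‖ ^ (n + 2) ≤ _).trans (hbound n)

lemma norm_sub_le_tsum_mul_of_hasSum_harmonicMonomial {L : ℕ → ℝ} (hL : Summable L)
    (hbound : ∀ n, (‖a n‖ + ‖b n‖) * (((n : ℝ) + 2) * ρ ^ (n + 1)) ≤ L n)
    (hz : ‖z‖ ≤ ρ) (hw : ‖w‖ ≤ ρ)
    (hFz : HasSum (fun n ↦ harmonicMonomial (a n) (b n) (n + 2) z) (F z))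
    (hFw : HasSum (fun n ↦ harmonicMonomial (a n) (b n) (n + 2) w) (F w)) :
    ‖F z - F w‖ ≤ (∑' n, L n) * ‖z - w‖ :=
  (hFz.sub hFw).norm_le_of_bounded (hL.hasSum.mul_right _) fun n ↦
    (norm_harmonicMonomial_sub_le _ _ hz hw _).trans <| by
      push_cast
      exact mul_le_mul_of_nonneg_right (hbound n) (norm_nonneg _)

theorem ball_sub_tsum_subset_image_of_hasSum_harmonicMonomial {s L : ℕ → ℝ} (hρ : 0 ≤ ρ)
    (hs : Summable s) (hsb : ∀ n, (‖a n‖ + ‖b n‖) * ρ ^ (n + 2) ≤ s n)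
    (hL : Summable L) (hLb : ∀ n, (‖a n‖ + ‖b n‖) * (((n : ℝ) + 2) * ρ ^ (n + 1)) ≤ L n)
    (hL1 : ∑' n, L n < 1)
    (hF : ∀ z ∈ closedBall (0 : ℂ) ρ,
      HasSum (fun n ↦ harmonicMonomial (a n) (b n) (n + 2) z) (F z)) :
    ball 0 (ρ - ∑' n, s n) ⊆ (fun z ↦ z + F z) '' ball 0 ρ := by
  have hLip : LipschitzOnWith (∑' n, L n).toNNReal F (closedBall 0 ρ) :=
    LipschitzOnWith.of_dist_le_mul fun z hz w hw ↦ by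
      rw [dist_eq_norm, dist_eq_norm]
      exact (norm_sub_le_tsum_mul_of_hasSum_harmonicMonomial hL hLb
        (mem_closedBall_zero_iff.mp hz) (mem_closedBall_zero_iff.mp hw) (hF z hz) (hF w hw)).trans
        (by gcongr; exact Real.le_coe_toNNReal _)
  exact ball_sub_subset_image_add_of_lipschitzOnWith hρ (Real.toNNReal_lt_one.mpr hL1) hLip
    fun z hz ↦ norm_le_tsum_of_hasSum_harmonicMonomial hs hsb (mem_closedBall_zero_iff.mp hz)
      (hF z hz)

end HarmonicTail

section Weights

variable {α ρ : ℝ}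

lemma one_le_one_add_succ_mul (hα : 0 ≤ α) (n : ℕ) : 1 ≤ 1 + ((n : ℝ) + 1) * α :=
  le_add_of_nonneg_right (by positivity)

lemma Summable.div_of_one_le {f D : ℕ → ℝ} (hf : Summable f) (hf0 : ∀ n, 0 ≤ f n)
    (hD : ∀ n, 1 ≤ D n) : Summable fun n ↦ f n / D n :=
  hf.of_nonneg_of_le (fun n ↦ div_nonneg (hf0 n) (zero_le_one.trans (hD n)))
    fun n ↦ div_le_self (hf0 n) (hD n)

lemma summable_two_mul_pow_add_two_div (hα : 0 ≤ α) (hρ0 : 0 ≤ ρ) (hρ1 : ρ < 1) :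
    Summable fun n : ℕ ↦ 2 * ρ ^ (n + 2) / (1 + ((n : ℝ) + 1) * α) :=
  ((summable_nat_add_iff 2).mpr ((summable_geometric_of_lt_one hρ0 hρ1).mul_left 2)).div_of_one_le
    (fun n ↦ by positivity) (one_le_one_add_succ_mul hα)

lemma summable_two_mul_add_two_mul_pow_succ_div (hα : 0 ≤ α) (hρ0 : 0 ≤ ρ) (hρ1 : ρ < 1) :
    Summable fun n : ℕ ↦ 2 * ((n : ℝ) + 2) * ρ ^ (n + 1) / (1 + ((n : ℝ) + 1) * α) := by
  have hn := (summable_pow_mul_geometric_of_norm_lt_one 1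
    (by rwa [Real.norm_of_nonneg hρ0] : ‖ρ‖ < 1)).mul_left 2
  have hgeom := (summable_geometric_of_lt_one hρ0 hρ1).mul_left 2
  have hshift := (summable_nat_add_iff 1).mpr (hn.add hgeom)
  exact (hshift.congr fun n ↦ by push_cast; ring).div_of_one_le (fun n ↦ by positivity)
    (one_le_one_add_succ_mul hα)

end Weights

theorem landau_GkHa_covering_general (M α : ℝ) (hα : 0 ≤ α)
    (h g : ℂ → ℂ) (a b : ℕ → ℂ)
    (hhsum : ∀ z ∈ Metric.ball (0:ℂ) 1, HasSum (fun n : ℕ => a n * z ^ n) (h z))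
    (hgsum : ∀ z ∈ Metric.ball (0:ℂ) 1, HasSum (fun n : ℕ => b n * z ^ n) (g z))
    (ha0 : a 0 = 0) (ha1 : a 1 = 1) (hb0 : b 0 = 0) (hb1 : b 1 = 0)
    (hcoef : ∀ n : ℕ, 2 ≤ n →
      ‖a n‖ + ‖b n‖ ≤ 2 / (1 + ((n : ℝ) - 1) * α))
    (hbound : ∀ z ∈ Metric.ball (0:ℂ) 1,
      ‖h z + starRingEnd ℂ (g z)‖ < M)
    (ρ₃ : ℝ) (hρ₃ : ρ₃ ∈ Set.Ioo (0:ℝ) 1)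
    (hroot : Real.pi / (4 * M)
        - ∑' n : ℕ, 2 * ((n : ℝ) + 2) * ρ₃ ^ (n + 1) / (1 + ((n : ℝ) + 1) * α) = 0) :
    Metric.ball (0:ℂ)
        (Real.pi / (4 * M) * ρ₃
          - ∑' n : ℕ, 2 * ρ₃ ^ (n + 2) / (1 + ((n : ℝ) + 1) * α)) ⊆
      (fun z => h z + starRingEnd ℂ (g z)) '' (Metric.ball 0 ρ₃) := by
  obtain ⟨hρ0, hρ1⟩ := hρ₃
  have hcoef' (n : ℕ) : ‖a (n + 2)‖ + ‖b (n + 2)‖ ≤ 2 / (1 + ((n : ℝ) + 1) * α) := by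
    simpa [add_sub_assoc, one_add_one_eq_two.symm] using hcoef (n + 2) (by omega)
  have hcoef2 : ∀ n, ‖a n‖ + ‖b n‖ ≤ 2
    | 0 => by simp [ha0, hb0]
    | 1 => by norm_num [ha1, hb1]
    | n + 2 => (hcoef' n).trans (div_le_self zero_le_two (one_le_one_add_succ_mul hα n))
  have hf : ∀ z ∈ ball (0 : ℂ) 1,
      HasSum (fun n ↦ harmonicMonomial (a n) (b n) n z) (h z + conj (g z)) :=
    fun z hz ↦ (hhsum z hz).add (hasSum_conj'.mpr (hgsum z hz))
  have hM : 1 ≤ M := by simpa [ha1] using norm_coeff_one_le hcoef2 hf hbound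
  have hc : π / (4 * M) < 1 := (div_lt_one (by linarith)).mpr (by linarith [Real.pi_lt_four])
  have hweight (n : ℕ) (x : ℝ) (hx : 0 ≤ x) :
      (‖a (n + 2)‖ + ‖b (n + 2)‖) * x ≤ 2 * x / (1 + ((n : ℝ) + 1) * α) :=
    (mul_le_mul_of_nonneg_right (hcoef' n) hx).trans_eq (by ring)
  calc ball 0 (π / (4 * M) * ρ₃ - _)
      ⊆ ball 0 (ρ₃ - ∑' n : ℕ, 2 * ρ₃ ^ (n + 2) / (1 + ((n : ℝ) + 1) * α)) :=
        ball_subset_ball (by nlinarith)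
    _ ⊆ (fun z ↦ z + (h z + conj (g z) - z)) '' ball 0 ρ₃ :=
        ball_sub_tsum_subset_image_of_hasSum_harmonicMonomial hρ0.le
          (summable_two_mul_pow_add_two_div hα hρ0.le hρ1) (fun n ↦ hweight n _ (by positivity))
          (summable_two_mul_add_two_mul_pow_succ_div hα hρ0.le hρ1)
          (fun n ↦ (hweight n _ (by positivity)).trans_eq (by ring))
          (by linarith)
          fun z hz ↦ hasSum_harmonicMonomial_add_two ha0 ha1 hb0 hb1
            (hf z (closedBall_subset_ball hρ1 hz))
    _ = _ := by simp only [add_sub_cancel]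

/-- Landau-type theorem (covering) under the sharp coefficient bounds of the
class `G_{k,H}(α,1)`: with `ρ₃` a root of
`π/(4M) - ∑_{n≥2} 2n r^{n-1}/(1 + (n-1)α) = 0`, the image `f(D_{ρ₃})`
contains the disc of radius `R₃ = (π/(4M)) ρ₃ - ∑_{n≥2} 2 ρ₃ⁿ/(1 + (n-1)α)`. -/
theorem landau_GkHa_covering (M α : ℝ) (hM : 0 < M) (hα : 0 ≤ α)
    (h g : ℂ → ℂ) (a b : ℕ → ℂ)
    (hhsum : ∀ z ∈ Metric.ball (0:ℂ) 1, HasSum (fun n : ℕ => a n * z ^ n) (h z))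
    (hgsum : ∀ z ∈ Metric.ball (0:ℂ) 1, HasSum (fun n : ℕ => b n * z ^ n) (g z))
    (ha0 : a 0 = 0) (ha1 : a 1 = 1) (hb0 : b 0 = 0) (hb1 : b 1 = 0)
    (hcoef : ∀ n : ℕ, 2 ≤ n →
      ‖a n‖ + ‖b n‖ ≤ 2 / (1 + ((n : ℝ) - 1) * α))
    (hbound : ∀ z ∈ Metric.ball (0:ℂ) 1,
      ‖h z + starRingEnd ℂ (g z)‖ < M)
    (ρ₃ : ℝ) (hρ₃ : ρ₃ ∈ Set.Ioo (0:ℝ) 1)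
    (hroot : Real.pi / (4 * M)
        - ∑' n : ℕ, 2 * ((n : ℝ) + 2) * ρ₃ ^ (n + 1) / (1 + ((n : ℝ) + 1) * α) = 0) :
    Metric.ball (0:ℂ)
        (Real.pi / (4 * M) * ρ₃
          - ∑' n : ℕ, 2 * ρ₃ ^ (n + 2) / (1 + ((n : ℝ) + 1) * α)) ⊆
      (fun z => h z + starRingEnd ℂ (g z)) '' (Metric.ball 0 ρ₃) :=
  landau_GkHa_covering_general M α hα h g a b hhsum hgsum ha0 ha1 hb0 hb1 hcoef hbound ρ₃ hρ₃ hroot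
end
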